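/- arXiv:2309.13367 — 9 statements merged into one kernel-verified Lean document; each statement's English description precedes it below -/
import Mathlib

section
/- Let κ be regular uncountable, S ⊆ κ stationary, ξ an ordinal, and L = ⟨A_δ : δ ∈ S⟩ a ξ-bounded ladder system (each A_δ has order type ≤ ξ). Let μ be a cardinal > 1 and set θ := μ^|ξ|. If Φ(L, μ, θ) holds, then ◊(L, μ) holds. -/
open Cardinal Set

namespace LadderPaper

/-- `C` is a closed unbounded subset of the ordinal `κ`. -/
def IsClubIn (C : Set Ordinal) (κ : Ordinal) : Prop :=
  C ⊆ Set.Iio κ ∧ (∀ α < κ, ∃ β ∈ C, α ≤ β) ∧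
    ∀ α < κ, 0 < α → (∀ β < α, ∃ γ ∈ C, β < γ ∧ γ < α) → α ∈ C

/-- `S` is a stationary subset of the ordinal `κ`. -/
def IsStationaryIn (S : Set Ordinal) (κ : Ordinal) : Prop :=
  S ⊆ Set.Iio κ ∧ ∀ C, IsClubIn C κ → (S ∩ C).Nonempty

/-- `A` is a ladder system over `S ⊆ κ`: each `A δ` (for `δ ∈ S`) is a cofinal subset of `δ`. -/
def IsLadderOn (κ : Ordinal) (S : Set Ordinal) (A : Ordinal → Set Ordinal) : Prop :=
  IsStationaryIn S κ ∧ ∀ δ ∈ S, A δ ⊆ Set.Iio δ ∧ ∀ β < δ, ∃ α ∈ A δ, β ≤ α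

/-- The order type of a set of ordinals. -/
noncomputable def otp (A : Set Ordinal) : Ordinal := Ordinal.type ((· < ·) : A → A → Prop)

/-- The set of accumulation points of a set of ordinals. -/
def acc (A : Set Ordinal) : Set Ordinal := {α ∈ A | sSup (A ∩ Set.Iio α) = α ∧ 0 < α}

/-- The set of non-accumulation points of a set of ordinals. -/
def nacc (A : Set Ordinal) : Set Ordinal := A \ acc A

/-- For a ξ-bounded ladder system `A` over a stationary `S ⊆ κ` and
a cardinal `μ > 1`, if `Φ(L, μ, μ^|ξ|)` holds then `◊(L, μ)` holds. -/
theorem stmt1 (κ : Cardinal) (hκreg : κ.IsRegular) (hκunc : ℵ₀ < κ)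
    (S : Set Ordinal) (A : Ordinal → Set Ordinal) (hL : IsLadderOn κ.ord S A)
    (ξ : Ordinal) (hbd : ∀ δ ∈ S, otp (A δ) ≤ ξ)
    (μ : Cardinal) (hμ : 1 < μ)
    (hPhi : ∀ F : ∀ δ : Ordinal, (↥(A δ) → Ordinal) → Ordinal,
      (∀ δ ∈ S, ∀ p : ↥(A δ) → Ordinal, (∀ x, p x < μ.ord) → F δ p < (μ ^ ξ.card).ord) →
      ∃ g : Ordinal → Ordinal, (∀ δ ∈ S, g δ < (μ ^ ξ.card).ord) ∧
        ∀ f : Ordinal → Ordinal, (∀ α < κ.ord, f α < μ.ord) →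
          IsStationaryIn {δ ∈ S | F δ ((A δ).restrict f) = g δ} κ.ord) :
    ∃ G : ∀ δ : Ordinal, ↥(A δ) → Ordinal,
      (∀ δ ∈ S, ∀ x, G δ x < μ.ord) ∧
      ∀ f : Ordinal → Ordinal, (∀ α < κ.ord, f α < μ.ord) →
        IsStationaryIn {δ ∈ S | (A δ).restrict f = G δ} κ.ord := by
  classical
  set θ : Cardinal := μ ^ ξ.card with hθ
  have hμ0 : (0 : Cardinal) < μ := zero_lt_one.trans hμ
  -- cardinality bound
  have hcard : ∀ δ ∈ S, #(↥(A δ) → ↥(Set.Iio μ.ord)) ≤ #(↥(Set.Iio θ.ord)) := by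
    intro δ hδ
    rw [Cardinal.mk_arrow, Ordinal.mk_Iio_ordinal, Ordinal.mk_Iio_ordinal, Cardinal.card_ord,
      Cardinal.card_ord, Cardinal.lift_lift, hθ, Cardinal.lift_power]
    have hA : #↥(A δ) = (otp (A δ)).card := (Ordinal.card_type _).symm
    refine Cardinal.power_le_power_left (by simpa using hμ0.ne') ?_
    rw [hA]
    exact Cardinal.lift_le.2 (Ordinal.card_le_card (hbd δ hδ))
  -- choose codings
  have hemb : ∀ δ : Ordinal, ∃ e : (↥(A δ) → ↥(Set.Iio μ.ord)) → Ordinal,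
      δ ∈ S → Function.Injective e ∧ ∀ t, e t < θ.ord := by
    intro δ
    by_cases hδ : δ ∈ S
    · obtain ⟨i⟩ := Cardinal.le_def _ _ |>.1 (hcard δ hδ)
      exact ⟨fun t => (i t).1, fun _ =>
        ⟨fun a b hab => i.injective (Subtype.val_injective hab), fun t => (i t).2⟩⟩
    · exact ⟨fun _ => 0, fun h => absurd h hδ⟩
  choose e he using hemb
  -- the Φ-coloring
  set F : ∀ δ : Ordinal, (↥(A δ) → Ordinal) → Ordinal :=
    fun δ p => if h : ∀ x, p x < μ.ord then e δ (fun x => ⟨p x, h x⟩) else 0 with hFdef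
  have hFbd : ∀ δ ∈ S, ∀ p : ↥(A δ) → Ordinal, (∀ x, p x < μ.ord) → F δ p < θ.ord := by
    intro δ hδ p hp
    rw [hFdef]
    simp only [dif_pos hp]
    exact (he δ hδ).2 _
  obtain ⟨g, hg, hst⟩ := hPhi F hFbd
  -- decode g
  refine ⟨fun δ => if h : ∃ t, e δ t = g δ then fun x => (h.choose x).1 else fun _ => 0, ?_, ?_⟩
  · intro δ hδ x
    by_cases h : ∃ t, e δ t = g δ
    · simp only [dif_pos h]
      exact (h.choose x).2
    · simp only [dif_neg h]
      rw [← Cardinal.ord_zero]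
      exact Cardinal.ord_lt_ord.2 hμ0
  · intro f hf
    have hst' := hst f hf
    have hsub : {δ ∈ S | F δ ((A δ).restrict f) = g δ} ⊆
        {δ ∈ S | (A δ).restrict f =
          if h : ∃ t, e δ t = g δ then fun x => (h.choose x).1 else fun _ => 0} := by
      rintro δ ⟨hδS, hFe⟩
      refine ⟨hδS, ?_⟩
      have hδκ : δ < κ.ord := hL.1.1 hδS
      have hpval : ∀ x : ↥(A δ), (A δ).restrict f x < μ.ord := fun x =>
        hf x.1 (lt_trans ((hL.2 δ hδS).1 x.2) hδκ)
      have hF : F δ ((A δ).restrict f) = e δ (fun x => ⟨f x.1, hpval x⟩) := by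
        rw [hFdef]; simp only [dif_pos hpval]; rfl
      have hex : ∃ t, e δ t = g δ := ⟨fun x => ⟨f x.1, hpval x⟩, hF ▸ hFe⟩
      have h2 : hex.choose = fun x : ↥(A δ) => (⟨f x.1, hpval x⟩ : ↥(Set.Iio μ.ord)) :=
        (he δ hδS).1 (hex.choose_spec.trans (hF ▸ hFe).symm)
      rw [dif_pos hex, h2]
      rfl
    exact ⟨fun δ hδ => hL.1.1 hδ.1, fun C hC => by
      obtain ⟨δ, hδ1, hδ2⟩ := hst'.2 C hC
      exact ⟨δ, hsub hδ1, hδ2⟩⟩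

end LadderPaper
end

section
/- Let θ ≤ λ be infinite cardinals with 2^{<θ} ≤ λ, and let A ⊆ [λ]^θ be a family such that for every b ∈ [λ]^θ there is a ∈ A with |a ∩ b| = θ. Then for every family H of functions from λ to 2 with |H| = λ⁺, there exists a ∈ A such that the set {h↾a : h ∈ H} has cardinality at least θ. -/
open Cardinal Set

namespace LadderPaper

/-- Lift a cardinal to the universe where cardinalities of sets of ordinals live. -/
noncomputable abbrev cl (θ : Cardinal.{0}) : Cardinal.{1} := Cardinal.lift.{1} θ

/-- Lift an ordinal to the universe where order types of sets of ordinals live. -/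
noncomputable abbrev ol (ξ : Ordinal.{0}) : Ordinal.{1} := Ordinal.lift.{1} ξ

/-- If `θ ≤ lam` are infinite with `2^{<θ} ≤ lam` and `A` is a meeting family
for `[lam]^θ`, then every family `H` of `lam⁺` many functions from `lam` to `2` has at least
`θ` many distinct restrictions to some `a ∈ A`. -/
theorem stmt3 (θ lam : Cardinal.{0}) (hθ : ℵ₀ ≤ θ) (hlam : ℵ₀ ≤ lam) (hθlam : θ ≤ lam)
    (hpow : ∀ ν : Cardinal.{0}, ν < θ → (2 : Cardinal) ^ ν ≤ lam)
    (A : Set (Set Ordinal.{0}))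
    (hA : ∀ a ∈ A, a ⊆ Set.Iio lam.ord ∧ #a = cl θ)
    (hmeet : ∀ b ⊆ Set.Iio lam.ord, #b = cl θ → ∃ a ∈ A, #↥(a ∩ b) = cl θ)
    (H : Set (Ordinal.{0} → Fin 2))
    (hHsupp : ∀ h ∈ H, ∀ α, α ∉ Set.Iio lam.ord → h α = 0)
    (hHcard : #H = cl (Order.succ lam)) :
    ∃ a ∈ A, cl θ ≤ #((fun h : Ordinal.{0} → Fin 2 => a.restrict h) '' H) := by
  classical
  -- Step existence: given any previously-chosen points, find a pair in H agreeing on them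
  -- but still distinct, with a difference point below lam.ord.
  have ex : ∀ i : Ordinal.{0}, i < θ.ord → ∀ d : Ordinal.{0} → Ordinal.{0},
      ∃ t : (Ordinal.{0} → Fin 2) × (Ordinal.{0} → Fin 2) × Ordinal.{0},
        t.1 ∈ H ∧ t.2.1 ∈ H ∧ (∀ j < i, t.1 (d j) = t.2.1 (d j)) ∧
        t.1 t.2.2 ≠ t.2.1 t.2.2 ∧ t.2.2 < lam.ord := by
    intro i hi d
    have hicard : i.card < θ := Cardinal.lt_ord.mp hi
    have hninj : ¬ Function.Injective
        (fun (h : ↥H) (j : ↥(Set.Iio i)) => (h : Ordinal.{0} → Fin 2) (d j)) := by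
      intro hinj
      have h1 := Cardinal.mk_le_of_injective hinj
      have h2 : #(↥(Set.Iio i) → Fin 2) = Cardinal.lift.{1} ((2 : Cardinal.{0}) ^ i.card) := by
        rw [Cardinal.mk_arrow, Cardinal.lift_uzero, Ordinal.mk_Iio_ordinal,
          Cardinal.lift_power]
        norm_num
      rw [hHcard, h2] at h1
      have h3 : Order.succ lam ≤ (2 : Cardinal.{0}) ^ i.card := Cardinal.lift_le.mp h1
      have h4 : (2 : Cardinal.{0}) ^ i.card ≤ lam := hpow _ hicard
      exact absurd (h3.trans h4) (not_le.mpr (Order.lt_succ lam))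
    obtain ⟨g, h, hgh, hne⟩ := Function.not_injective_iff.mp hninj
    have hvne : (g : Ordinal.{0} → Fin 2) ≠ (h : Ordinal.{0} → Fin 2) :=
      fun hv => hne (Subtype.ext hv)
    obtain ⟨x, hx⟩ := Function.ne_iff.mp hvne
    have hxlt : x < lam.ord := by
      by_contra hxge
      exact hx (by rw [hHsupp g g.2 x hxge, hHsupp h h.2 x hxge])
    refine ⟨⟨g, h, x⟩, g.2, h.2, ?_, hx, hxlt⟩
    intro j hj
    exact congrFun hgh ⟨j, hj⟩
  -- Build the transfinite sequence of pairs and splitting points.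
  let F : Ordinal.{0} → (Ordinal.{0} → Fin 2) × (Ordinal.{0} → Fin 2) × Ordinal.{0} :=
    WellFounded.fix Ordinal.lt_wf (fun i IH =>
      if hi : i < θ.ord then
        Classical.choose (ex i hi (fun j => if hj : j < i then (IH j hj).2.2 else 0))
      else ⟨fun _ => 0, fun _ => 0, 0⟩)
  let G : Ordinal.{0} → (Ordinal.{0} → Fin 2) := fun i => (F i).1
  let K : Ordinal.{0} → (Ordinal.{0} → Fin 2) := fun i => (F i).2.1
  let δ : Ordinal.{0} → Ordinal.{0} := fun i => (F i).2.2
  have hFspec : ∀ i, i < θ.ord → G i ∈ H ∧ K i ∈ H ∧ (∀ j < i, G i (δ j) = K i (δ j)) ∧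
      G i (δ i) ≠ K i (δ i) ∧ δ i < lam.ord := by
    intro i hi
    have hfix : F i = if hi : i < θ.ord then
        Classical.choose (ex i hi (fun j => if hj : j < i then (F j).2.2 else 0))
      else ⟨fun _ => 0, fun _ => 0, 0⟩ :=
      WellFounded.fix_eq _ _ _
    rw [dif_pos hi] at hfix
    obtain ⟨hg, hk, hagree, hdiff, hlt'⟩ :=
      Classical.choose_spec (ex i hi (fun j => if hj : j < i then (F j).2.2 else 0))
    refine ⟨by rw [show G i = _ from congrArg Prod.fst hfix]; exact hg,
      by rw [show K i = _ from congrArg (fun t => t.2.1) hfix]; exact hk, ?_,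
      ?_, ?_⟩
    · intro j hj
      have := hagree j hj
      rw [dif_pos hj] at this
      rw [show G i = _ from congrArg Prod.fst hfix,
        show K i = _ from congrArg (fun t => t.2.1) hfix]
      exact this
    · rw [show G i = _ from congrArg Prod.fst hfix,
        show K i = _ from congrArg (fun t => t.2.1) hfix,
        show δ i = _ from congrArg (fun t => t.2.2) hfix]
      exact hdiff
    · rw [show δ i = _ from congrArg (fun t => t.2.2) hfix]
      exact hlt'
  -- δ is injective below θ.ord
  have hδinj : Set.InjOn δ (Set.Iio θ.ord) := by
    intro i hi j hj hij
    by_contra hne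
    rcases lt_or_gt_of_ne hne with h | h
    · have h1 := (hFspec j hj).2.2.1 i h
      rw [hij] at h1
      exact (hFspec j hj).2.2.2.1 h1
    · have h1 := (hFspec i hi).2.2.1 j h
      rw [← hij] at h1
      exact (hFspec i hi).2.2.2.1 h1
  set b : Set Ordinal.{0} := δ '' Set.Iio θ.ord with hbdef
  have hbsub : b ⊆ Set.Iio lam.ord := by
    rintro x ⟨i, hi, rfl⟩
    exact (hFspec i hi).2.2.2.2
  have hbcard : #b = cl θ := by
    rw [hbdef, Cardinal.mk_image_eq_of_injOn δ _ hδinj, Ordinal.mk_Iio_ordinal,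
      Cardinal.card_ord]
  obtain ⟨a, haA, hab⟩ := hmeet b hbsub hbcard
  refine ⟨a, haA, ?_⟩
  by_contra hltR
  push_neg at hltR
  set R := ((fun h : Ordinal.{0} → Fin 2 => a.restrict h) '' H) with hRdef
  -- main contradiction step
  have main : ∀ i i', i < i' → i' < θ.ord → δ i ∈ a →
      a.restrict (G i) = a.restrict (G i') → a.restrict (K i) = a.restrict (K i') → False := by
    intro i i' hii' hi' hmem hGe hKe
    have hii : i < θ.ord := hii'.trans hi'
    have h1 : G i' (δ i) = K i' (δ i) := (hFspec i' hi').2.2.1 i hii'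
    have h2 : G i (δ i) = G i' (δ i) := congrFun hGe ⟨δ i, hmem⟩
    have h3 : K i (δ i) = K i' (δ i) := congrFun hKe ⟨δ i, hmem⟩
    exact (hFspec i hii).2.2.2.1 (by rw [h2, h1, ← h3])
  have hix : ∀ x : ↥(a ∩ b), ∃ i, i < θ.ord ∧ δ i = (x : Ordinal.{0}) := by
    rintro ⟨x, hxa, i, hi, rfl⟩
    exact ⟨i, hi, rfl⟩
  choose ix hix1 hix2 using hix
  have hmapG : ∀ x : ↥(a ∩ b), a.restrict (G (ix x)) ∈ R :=
    fun x => ⟨G (ix x), (hFspec _ (hix1 x)).1, rfl⟩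
  have hmapK : ∀ x : ↥(a ∩ b), a.restrict (K (ix x)) ∈ R :=
    fun x => ⟨K (ix x), (hFspec _ (hix1 x)).2.1, rfl⟩
  let φ : ↥(a ∩ b) → ↥R × ↥R := fun x => (⟨_, hmapG x⟩, ⟨_, hmapK x⟩)
  have hninjφ : ¬ Function.Injective φ := by
    intro hinj
    have h1 := Cardinal.mk_le_of_injective hinj
    rw [hab] at h1
    have hRR : #(↥R × ↥R) < cl θ := by
      simp only [Cardinal.mk_prod, Cardinal.lift_id]
      exact Cardinal.mul_lt_of_lt (Cardinal.aleph0_le_lift.mpr hθ) hltR hltR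
    exact absurd h1 (not_le.mpr hRR)
  obtain ⟨x, y, hφ, hxy⟩ := Function.not_injective_iff.mp hninjφ
  have hGe : a.restrict (G (ix x)) = a.restrict (G (ix y)) :=
    congrArg Subtype.val (congrArg Prod.fst hφ)
  have hKe : a.restrict (K (ix x)) = a.restrict (K (ix y)) :=
    congrArg Subtype.val (congrArg Prod.snd hφ)
  have hne : ix x ≠ ix y := by
    intro h
    apply hxy
    apply Subtype.ext
    rw [← hix2 x, ← hix2 y, h]
  rcases hne.lt_or_gt with h | h
  · exact main _ _ h (hix1 y) (by rw [hix2 x]; exact x.2.1) hGe hKe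
  · exact main _ _ h (hix1 x) (by rw [hix2 y]; exact y.2.1) hGe.symm hKe.symm

end LadderPaper
end

section
/- Suppose θ and λ are infinite cardinals such that 2^θ ≤ λ and there exists a family A ⊆ [λ]^θ of size λ meeting every member of [λ]^θ in a set of size θ (i.e., m(λ,θ) = λ). Then there is a colouring c : λ × 2^λ → θ such that for every B ⊆ 2^λ with |B| = λ⁺ there exists α < λ with c[{α} × B] = θ (c restricted to {α} × B is onto θ). -/
open Cardinal Set

/-!
Code each `β < 2^λ` by a subset `x β ⊆ λ`. Since `|B| = λ⁺ > 2^θ`, a recursion of length `θ`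
produces points `ξ_j` and pairs `β_j, β'_j ∈ B` whose codes agree on all earlier points and are
split by `ξ_j`. The set `b` of these points has size `θ`, so some `a ∈ A` meets it in `θ` points;
the pairs of traces `(x β_j ∩ a, x β'_j ∩ a)` at those points are pairwise distinct, hence
`B` has `θ` distinct traces on `a`. There are only `λ · 2^θ = λ` pairs of a set `a ∈ A` and a
`θ`-sequence of subsets of `a`; listing them as `(a_α, F_α)` for `α < λ` and colouring `β` by
the `τ` with `F_α τ = x β ∩ a_α`, the guess listing `θ` distinct traces of `B` is onto.
-/

namespace LadderPaper

universe u

section Separation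

variable {X ι : Type u} (x : ι → Set X)

theorem exists_separating_point_of_agree (hx : Function.Injective x) (E : Set X)
    (hE : 2 ^ #E < #ι) :
    ∃ p : X × ι × ι, (∀ e ∈ E, e ∈ x p.2.1 ↔ e ∈ x p.2.2) ∧ p.1 ∈ x p.2.1 ∧ p.1 ∉ x p.2.2 := by
  obtain ⟨i, j, hij, hne⟩ := Function.not_injective_iff.mp fun h : Function.Injective
      (fun k => ((↑) ⁻¹' x k : Set E)) => (mk_le_of_injective h).not_gt (by rwa [mk_set])
  have hagree : ∀ e ∈ E, e ∈ x i ↔ e ∈ x j := fun e he => Set.ext_iff.mp hij ⟨e, he⟩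
  obtain ⟨ξ, hξ⟩ : ∃ ξ, ¬(ξ ∈ x i ↔ ξ ∈ x j) := by
    by_contra! hall
    exact hx.ne hne (Set.ext hall)
  by_cases h : ξ ∈ x i
  · exact ⟨(ξ, i, j), hagree, h, by tauto⟩
  · exact ⟨(ξ, j, i), fun e he => (hagree e he).symm, by tauto, h⟩

def IsSeparatingSeq {W : Type*} [LT W] (ξ : W → X) (i j : W → ι) : Prop :=
  ∀ w, ξ w ∈ x (i w) ∧ ξ w ∉ x (j w) ∧ ∀ v < w, (ξ v ∈ x (i w) ↔ ξ v ∈ x (j w))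

theorem exists_isSeparatingSeq (hx : Function.Injective x) (W : Type u) [LinearOrder W]
    [WellFoundedLT W] (hW : 2 ^ #W < #ι) :
    ∃ (ξ : W → X) (i j : W → ι), IsSeparatingSeq x ξ i j := by
  have step (w : W) (prev : ∀ v < w, X × ι × ι) := exists_separating_point_of_agree x hx
    (range fun v : Iio w => (prev v v.2).1) <| calc
      _ ≤ (2 : Cardinal) ^ #W :=
        power_le_power_left two_ne_zero (mk_range_le.trans (mk_set_le _))
      _ < #ι := hW
  choose next hnext using step
  set p : W → X × ι × ι := wellFounded_lt.fix next
  refine ⟨fun w => (p w).1, fun w => (p w).2.1, fun w => (p w).2.2, fun w => ?_⟩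
  have hp : p w = next w fun v _ => p v := wellFounded_lt.fix_eq next w
  obtain ⟨hagree, hmem, hnmem⟩ := hnext w fun v _ => p v
  rw [← hp] at hagree hmem hnmem
  exact ⟨hmem, hnmem, fun v hv => hagree _ ⟨⟨v, hv⟩, rfl⟩⟩

namespace IsSeparatingSeq

variable {x} {W : Type u} [LinearOrder W] {ξ : W → X} {i j : W → ι}

theorem injective (h : IsSeparatingSeq x ξ i j) : Function.Injective ξ := by
  have key {v w : W} (hvw : v < w) : ξ v ≠ ξ w := fun he =>
    (h w).2.1 (he ▸ ((h w).2.2 v hvw).mp (he ▸ (h w).1))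
  intro v w he
  by_contra hne
  rcases lt_or_gt_of_ne hne with hvw | hwv
  · exact key hvw he
  · exact key hwv he.symm

theorem injective_traces (h : IsSeparatingSeq x ξ i j) (a : Set X) :
    Function.Injective fun w : ξ ⁻¹' a =>
      (((↑) ⁻¹' x (i w) : Set a), ((↑) ⁻¹' x (j w) : Set a)) := by
  have key {v w : ξ ⁻¹' a} (hvw : v < w) (hi : ((↑) ⁻¹' x (i v) : Set a) = (↑) ⁻¹' x (i w))
      (hj : ((↑) ⁻¹' x (j v) : Set a) = (↑) ⁻¹' x (j w)) : False := by
    have hiw : ξ v ∈ x (i w) := Set.ext_iff.mp hi ⟨ξ v, v.2⟩ |>.mp (h v).1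
    have hjw : ξ v ∈ x (j w) := ((h w).2.2 v hvw).mp hiw
    exact (h v).2.1 (Set.ext_iff.mp hj ⟨ξ v, v.2⟩ |>.mpr hjw)
  intro v w he
  simp only [Prod.mk.injEq] at he
  by_contra hne
  rcases lt_or_gt_of_ne hne with hvw | hwv
  · exact key hvw he.1 he.2
  · exact key hwv he.1.symm he.2.symm

theorem le_mk_traces (h : IsSeparatingSeq x ξ i j) {κ : Cardinal.{u}} (hκ : ℵ₀ ≤ κ)
    {a : Set X} (ha : κ ≤ #(ξ ⁻¹' a)) :
    κ ≤ #(range fun k => ((↑) ⁻¹' x k : Set a)) := by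
  set T := range fun k => ((↑) ⁻¹' x k : Set a)
  have hT : κ ≤ #T * #T := by
    let pair (w : ξ ⁻¹' a) : T × T := (⟨_, i w, rfl⟩, ⟨_, j w, rfl⟩)
    have hpair : Function.Injective pair := fun v w he =>
      h.injective_traces a (congrArg (fun p => (p.1.val, p.2.val)) he)
    exact ha.trans ((mk_le_of_injective hpair).trans_eq (by rw [mk_prod, lift_id]))
  rcases lt_or_ge #T ℵ₀ with hfin | hinf
  · exact absurd (hT.trans_lt (mul_lt_aleph0 hfin hfin)) hκ.not_gt
  · rwa [mul_eq_self hinf] at hT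

end IsSeparatingSeq

end Separation

theorem exists_large_traces {X ι : Type u} {x : ι → Set X} (hx : Function.Injective x)
    {κ : Cardinal.{u}} (hκ : ℵ₀ ≤ κ) (hι : 2 ^ κ < #ι) :
    ∃ b ⊆ ⋃ k, x k, #b = κ ∧
      ∀ a : Set X, κ ≤ #(a ∩ b : Set X) → κ ≤ #(range fun k => ((↑) ⁻¹' x k : Set a)) := by
  obtain ⟨ξ, i, j, h⟩ := exists_isSeparatingSeq x hx κ.ord.ToType (by rwa [mk_ord_toType])
  refine ⟨range ξ, range_subset_iff.mpr fun w => mem_iUnion_of_mem _ (h w).1,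
    (mk_range_eq ξ h.injective).trans (mk_ord_toType κ), fun a ha => h.le_mk_traces hκ ?_⟩
  rwa [← image_preimage_eq_inter_range, mk_image_eq h.injective] at ha

theorem exists_injOn_Iio_two_power_ord (κ : Cardinal.{u}) :
    ∃ x : Ordinal.{u} → Set Ordinal.{u},
      (∀ β, x β ⊆ Iio κ.ord) ∧ Set.InjOn x (Iio ((2 : Cardinal) ^ κ).ord) := by
  have hcard : #(Iio ((2 : Cardinal) ^ κ).ord) = #(Set (Iio κ.ord)) := by
    rw [mk_Iio_ordinal, card_ord, mk_set, mk_Iio_ordinal, card_ord, lift_two_power]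
  obtain ⟨e⟩ := Cardinal.eq.mp hcard
  classical
  refine ⟨fun β => if h : β < ((2 : Cardinal) ^ κ).ord then (↑) '' e ⟨β, h⟩ else ∅, fun β => ?_,
    fun β hβ β' hβ' he => ?_⟩
  · dsimp only
    split
    · exact Subtype.coe_image_subset _ _
    · exact empty_subset _
  · simp only [dif_pos (mem_Iio.mp hβ), dif_pos (mem_Iio.mp hβ')] at he
    exact congrArg Subtype.val (e.injective (image_injective.mpr Subtype.val_injective he))

section Colouring

variable {X ι C : Type u} [Nonempty C] (x : ι → Set X) {A : Set (Set X)}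

open Classical in
noncomputable def traceColour (g : Σ a : A, (C → Set a)) (β : ι) : C :=
  if h : ∃ τ, g.2 τ = (↑) ⁻¹' x β then h.choose else Classical.arbitrary C

theorem traceColour_eq {a : A} {F : C → Set a} (hF : Function.Injective F) {β : ι} {τ : C}
    (hτ : F τ = (↑) ⁻¹' x β) : traceColour x ⟨a, F⟩ β = τ := by
  have h : ∃ τ, F τ = (↑) ⁻¹' x β := ⟨τ, hτ⟩
  rw [traceColour, dif_pos h]
  exact hF (h.choose_spec.trans hτ.symm)

theorem exists_colouring_onto_of_many_traces {J : Type u}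
    (hJ : #(Σ a : A, (C → Set a)) ≤ #J) :
    ∃ c : J → ι → C, ∀ a ∈ A, ∀ B : Set ι,
      #C ≤ #(range fun β : B => ((↑) ⁻¹' x β : Set a)) → ∃ α, ∀ τ, ∃ β ∈ B, c α β = τ := by
  classical
  obtain ⟨e⟩ := (le_def _ _).mp hJ
  refine ⟨fun α β => if h : ∃ g, e g = α then traceColour x h.choose β else Classical.arbitrary C,
    fun a ha B hB => ?_⟩
  obtain ⟨F⟩ := (le_def _ _).mp hB
  set g : Σ a : A, (C → Set a) := ⟨⟨a, ha⟩, fun τ => F τ⟩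
  have hg : ∃ g', e g' = e g := ⟨g, rfl⟩
  refine ⟨e g, fun τ => ?_⟩
  obtain ⟨⟨β, hβB⟩, hβ⟩ := (F τ).2
  refine ⟨β, hβB, ?_⟩
  simp only [dif_pos hg, e.injective hg.choose_spec]
  exact traceColour_eq x (Subtype.val_injective.comp F.injective) hβ.symm

end Colouring

theorem mk_sigma_arrow_set_le {X C : Type u} {A : Set (Set X)} {κ μ : Cardinal.{u}}
    (hκ : ℵ₀ ≤ κ) (hμ : ℵ₀ ≤ μ) (hC : #C ≤ κ) (hA : ∀ a ∈ A, #a ≤ κ) (hAμ : #A ≤ μ)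
    (hpow : 2 ^ κ ≤ μ) : #(Σ a : A, (C → Set a)) ≤ μ := by
  have hfun (a : A) : #(C → Set a) ≤ μ := calc
    #(C → Set a) = (2 ^ #a) ^ #C := by rw [← mk_set, power_def]
    _ ≤ (2 ^ κ) ^ κ := (power_le_power_right (power_le_power_left two_ne_zero (hA a a.2))).trans
      (power_le_power_left (power_ne_zero _ two_ne_zero) hC)
    _ = 2 ^ κ := by rw [← power_mul, mul_eq_self hκ]
    _ ≤ μ := hpow
  calc #(Σ a : A, (C → Set a))
      ≤ sum fun _ : A => μ := (mk_sigma _).trans_le (sum_le_sum _ _ hfun)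
    _ = #A * μ := sum_const' _ _
    _ ≤ μ * μ := by gcongr
    _ = μ := mul_eq_self hμ

theorem stmt4_general (θ lam : Cardinal.{0}) (hθ : ℵ₀ ≤ θ) (hlam : ℵ₀ ≤ lam)
    (hpow : (2 : Cardinal) ^ θ ≤ lam)
    (A : Set (Set Ordinal.{0})) (hAcard : #A = cl lam)
    (hA : ∀ a ∈ A, a ⊆ Set.Iio lam.ord ∧ #a = cl θ)
    (hmeet : ∀ b ⊆ Set.Iio lam.ord, #b = cl θ → ∃ a ∈ A, #↥(a ∩ b) = cl θ) :
    ∃ c : Ordinal.{0} → Ordinal.{0} → Ordinal.{0},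
      (∀ α < lam.ord, ∀ β < ((2 : Cardinal) ^ lam).ord, c α β < θ.ord) ∧
      ∀ B ⊆ Set.Iio ((2 : Cardinal) ^ lam).ord, #B = cl (Order.succ lam) →
        ∃ α < lam.ord, ∀ τ < θ.ord, ∃ β ∈ B, c α β = τ := by
  have hθ' : #(Iio θ.ord) = cl θ := by rw [mk_Iio_ordinal, card_ord]
  have hpow' : 2 ^ cl θ ≤ cl lam := by rw [← lift_two_power]; exact lift_le.mpr hpow
  obtain ⟨x, hxsub, hxinj⟩ := exists_injOn_Iio_two_power_ord lam
  have : Nonempty (Iio θ.ord) := ⟨⟨0, ord_pos.mpr (aleph0_pos.trans_le hθ)⟩⟩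
  have hguesses : #(Σ a : A, (Iio θ.ord → Set a)) ≤ #(Iio lam.ord) :=
    (mk_sigma_arrow_set_le (aleph0_le_lift.mpr hθ) (aleph0_le_lift.mpr hlam) hθ'.le
      (fun a ha => (hA a ha).2.le) hAcard.le hpow').trans_eq (by rw [mk_Iio_ordinal, card_ord])
  obtain ⟨c, hc⟩ := exists_colouring_onto_of_many_traces x hguesses
  refine ⟨fun α β => if h : α < lam.ord then c ⟨α, h⟩ β else 0,
    fun α hα β _ => by simp only [dif_pos hα]; exact (c _ β).2, fun B hBsub hBcard => ?_⟩
  obtain ⟨b, hb, hbcard, htraces⟩ := exists_large_traces (x := fun β : B => x β)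
    (fun β β' he => Subtype.ext (hxinj (hBsub β.2) (hBsub β'.2) he)) (aleph0_le_lift.mpr hθ)
    (hpow'.trans_lt (hBcard ▸ lift_lt.mpr (Order.lt_succ lam)))
  obtain ⟨a, haA, hab⟩ := hmeet b (hb.trans (iUnion_subset fun β => hxsub β)) hbcard
  obtain ⟨⟨α, hα⟩, honto⟩ := hc a haA B (hθ'.trans_le (htraces a hab.ge))
  refine ⟨α, hα, fun τ hτ => ?_⟩
  obtain ⟨β, hβB, hβ⟩ := honto ⟨τ, hτ⟩
  exact ⟨β, hβB, by simp only [dif_pos (mem_Iio.mp hα), hβ]⟩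

/-- If `2^θ ≤ lam` and `m(lam,θ) = lam` (witnessed by `A`), then
`onto({lam}, [2^lam]^{≤lam}, θ)` holds. -/
theorem stmt4 (θ lam : Cardinal.{0}) (hθ : ℵ₀ ≤ θ) (hlam : ℵ₀ ≤ lam) (hθlam : θ ≤ lam)
    (hpow : (2 : Cardinal) ^ θ ≤ lam)
    (A : Set (Set Ordinal.{0})) (hAcard : #A = cl lam)
    (hA : ∀ a ∈ A, a ⊆ Set.Iio lam.ord ∧ #a = cl θ)
    (hmeet : ∀ b ⊆ Set.Iio lam.ord, #b = cl θ → ∃ a ∈ A, #↥(a ∩ b) = cl θ) :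
    ∃ c : Ordinal.{0} → Ordinal.{0} → Ordinal.{0},
      (∀ α < lam.ord, ∀ β < ((2 : Cardinal) ^ lam).ord, c α β < θ.ord) ∧
      ∀ B ⊆ Set.Iio ((2 : Cardinal) ^ lam).ord, #B = cl (Order.succ lam) →
        ∃ α < lam.ord, ∀ τ < θ.ord, ∃ β ∈ B, c α β = τ :=
  stmt4_general θ lam hθ hlam hpow A hAcard hA hmeet

end LadderPaper
end

section
/- For all infinite cardinals θ ≤ λ with λ < θ^{+cf(θ)}, it holds that m(λ, θ) = λ; that is, there is a family A ⊆ [λ]^θ of size λ such that for every b ∈ [λ]^θ there is a ∈ A with |a ∩ b| = θ. -/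
open Cardinal Set

namespace LadderPaper

/-!
Induction on `λ`. If `θ < cf λ`, every `θ`-subset of `λ` is bounded in `λ`, so the union of
meeting families for the initial segments `γ < λ` is a meeting family for `λ`. Otherwise
`λ = ℵ_{α+ξ}` with `0 < ξ < cf θ` cannot be a successor cardinal, so `ξ` is a limit and
`cf λ = cf ξ < cf θ`; then `λ` is the union of `cf λ` smaller initial segments, and by the
pigeonhole principle every `θ`-subset of `λ` meets one of them in `θ` points. Finally the family
is padded with arbitrary `θ`-subsets to have size exactly `λ`.
-/

universe u

section MeetingFamily

variable {α β : Type u} {θ : Cardinal.{u}} {X : Set α} {A : Set (Set α)}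

/-- `A` witnesses `m(λ, θ) ≤ #A` for a set `X` of size `λ`. -/
structure IsMeetingFamily (θ : Cardinal.{u}) (X : Set α) (A : Set (Set α)) : Prop where
  subset : ∀ a ∈ A, a ⊆ X
  mk_eq : ∀ a ∈ A, #a = θ
  exists_mk_inter_eq : ∀ b ⊆ X, #b = θ → ∃ a ∈ A, #↥(a ∩ b) = θ

namespace IsMeetingFamily

theorem singleton (hX : #X = θ) : IsMeetingFamily θ X {X} where
  subset := by simp
  mk_eq := by simpa using hX
  exists_mk_inter_eq b hb hbθ := ⟨X, rfl, by rwa [inter_eq_right.2 hb]⟩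

theorem union (h : IsMeetingFamily θ X A) {B : Set (Set α)}
    (hB : B ⊆ {a | a ⊆ X ∧ #a = θ}) : IsMeetingFamily θ X (A ∪ B) where
  subset a ha := ha.elim (h.subset a) fun ha => (hB ha).1
  mk_eq a ha := ha.elim (h.mk_eq a) fun ha => (hB ha).2
  exists_mk_inter_eq b hb hbθ :=
    let ⟨a, ha, hab⟩ := h.exists_mk_inter_eq b hb hbθ
    ⟨a, Or.inl ha, hab⟩

theorem image (h : IsMeetingFamily θ X A) {f : α → β} (hf : InjOn f X) :
    IsMeetingFamily θ (f '' X) (Set.image f '' A) where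
  subset := by
    rintro _ ⟨a, ha, rfl⟩
    exact image_mono (h.subset a ha)
  mk_eq := by
    rintro _ ⟨a, ha, rfl⟩
    rw [mk_image_eq_of_injOn _ _ (hf.mono (h.subset a ha)), h.mk_eq a ha]
  exists_mk_inter_eq b hb hbθ := by
    have hb' : f '' (X ∩ f ⁻¹' b) = b := by rw [image_inter_preimage, inter_eq_right.2 hb]
    have hinj : InjOn f (X ∩ f ⁻¹' b) := hf.mono inter_subset_left
    obtain ⟨a, ha, hab⟩ := h.exists_mk_inter_eq (X ∩ f ⁻¹' b) inter_subset_left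
      (by rwa [← mk_image_eq_of_injOn _ _ hinj, hb'])
    refine ⟨f '' a, mem_image_of_mem _ ha, ?_⟩
    rw [← hb', ← hf.image_inter (h.subset a ha) inter_subset_left,
      mk_image_eq_of_injOn _ _ (hf.mono (inter_subset_left.trans (h.subset a ha))), hab]

theorem iUnion {ι : Type*} {X : ι → Set α} {A : ι → Set (Set α)} {Y : Set α}
    (h : ∀ i, IsMeetingFamily θ (X i) (A i)) (hXY : ∀ i, X i ⊆ Y)
    (hY : ∀ b ⊆ Y, #b = θ → ∃ i, #↥(b ∩ X i) = θ) : IsMeetingFamily θ Y (⋃ i, A i) where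
  subset a ha := by
    obtain ⟨i, ha⟩ := mem_iUnion.1 ha
    exact ((h i).subset a ha).trans (hXY i)
  mk_eq a ha := by
    obtain ⟨i, ha⟩ := mem_iUnion.1 ha
    exact (h i).mk_eq a ha
  exists_mk_inter_eq b hb hbθ := by
    obtain ⟨i, hi⟩ := hY b hb hbθ
    obtain ⟨a, ha, hab⟩ := (h i).exists_mk_inter_eq (b ∩ X i) inter_subset_right hi
    refine ⟨a, mem_iUnion.2 ⟨i, ha⟩, ?_⟩
    rwa [← inter_assoc, inter_eq_left.2 (inter_subset_left.trans ((h i).subset a ha))] at hab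

end IsMeetingFamily

theorem exists_injOn_image_eq_of_mk_eq {Y : Set α} (h : #X = #Y) :
    ∃ f : α → α, InjOn f X ∧ f '' X = Y := by
  obtain ⟨e⟩ := Cardinal.eq.1 h
  set f : α → α := Function.extend Subtype.val (fun x : X => (e x : α)) id
  have hf : ∀ x : X, f x = e x := Subtype.val_injective.extend_apply _ _
  refine ⟨f, fun x hx y hy hxy => ?_, ?_⟩
  · rw [hf ⟨x, hx⟩, hf ⟨y, hy⟩] at hxy
    simpa using e.injective (Subtype.ext hxy)
  · ext y
    constructor
    · rintro ⟨x, hx, rfl⟩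
      rw [hf ⟨x, hx⟩]
      exact (e _).2
    · intro hy
      exact ⟨e.symm ⟨y, hy⟩, (e.symm _).2, by rw [hf, e.apply_symm_apply]⟩

theorem IsMeetingFamily.exists_of_mk_eq (h : IsMeetingFamily θ X A) {Y : Set α} (hXY : #X = #Y) :
    ∃ B : Set (Set α), #B ≤ #A ∧ IsMeetingFamily θ Y B :=
  let ⟨f, hf, hfXY⟩ := exists_injOn_image_eq_of_mk_eq hXY
  ⟨Set.image f '' A, mk_image_le, hfXY ▸ h.image hf⟩

theorem exists_isMeetingFamily_of_cover {ι : Type u} {κ : Cardinal.{u}} {X : ι → Set α}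
    {Y : Set α} (hκ : ℵ₀ ≤ κ) (hι : #ι ≤ κ)
    (hX : ∀ i, ∃ A : Set (Set α), #A ≤ κ ∧ IsMeetingFamily θ (X i) A) (hXY : ∀ i, X i ⊆ Y)
    (hY : ∀ b ⊆ Y, #b = θ → ∃ i, #↥(b ∩ X i) = θ) :
    ∃ A : Set (Set α), #A ≤ κ ∧ IsMeetingFamily θ Y A := by
  choose A hAκ hA using hX
  refine ⟨⋃ i, A i, ?_, IsMeetingFamily.iUnion hA hXY hY⟩
  calc #↥(⋃ i, A i) ≤ #ι * ⨆ i, #(A i) := mk_iUnion_le A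
    _ ≤ κ * κ := mul_le_mul' hι (ciSup_le' hAκ)
    _ = κ := mul_eq_self hκ

theorem exists_mk_inter_eq_of_mk_lt_cof {ι : Type u} {X : ι → Set α} {b : Set α}
    (hθ : ℵ₀ ≤ θ) (hι : #ι < θ.ord.cof) (hb : b ⊆ ⋃ i, X i) (hbθ : #b = θ) :
    ∃ i, #↥(b ∩ X i) = θ := by
  choose f hf using fun x : b => mem_iUnion.1 (hb x.2)
  obtain ⟨i, t, htb, hθt, hti⟩ := infinite_pigeonhole_set f θ hbθ.ge hθ hι
  refine ⟨i, le_antisymm (hbθ ▸ mk_le_mk_of_subset inter_subset_left) (hθt.trans ?_)⟩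
  exact mk_le_mk_of_subset fun x hx => ⟨htb hx, hti hx ▸ hf _⟩

theorem mk_symmDiff_singleton {a : Set α} (ha : ℵ₀ ≤ #a) (x : α) :
    #↥(symmDiff a {x}) = #a := by
  apply le_antisymm
  · calc #↥(symmDiff a {x}) ≤ #↥(a ∪ {x}) := mk_le_mk_of_subset symmDiff_subset_union
      _ ≤ #a + 1 := by simpa using mk_union_le a {x}
      _ = #a := add_one_eq ha
  · have hdiff : #a ≤ #↥(a \ {x}) := by
      by_contra! hlt
      have := le_mk_sdiff_add_mk a {x}
      rw [mk_singleton] at this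
      exact this.not_gt (add_lt_of_lt ha hlt (one_lt_aleph0.trans_le ha))
    exact hdiff.trans (mk_le_mk_of_subset fun y hy => Or.inl hy)

theorem mk_le_mk_setOf_subset_mk_eq (hθ : ℵ₀ ≤ θ) (hθX : θ ≤ #X) :
    #X ≤ #{a : Set α | a ⊆ X ∧ #a = θ} := by
  obtain ⟨a, haX, haθ⟩ := le_mk_iff_exists_subset.1 hθX
  refine mk_le_of_injective (f := fun x : X => ⟨symmDiff a {(x : α)}, ?_, ?_⟩) ?_
  · exact symmDiff_subset_union.trans (union_subset haX (singleton_subset_iff.2 x.2))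
  · rw [mk_symmDiff_singleton (haθ ▸ hθ), haθ]
  · intro x y hxy
    exact Subtype.ext (singleton_injective (symmDiff_right_injective a (congrArg Subtype.val hxy)))

theorem IsMeetingFamily.exists_mk_eq (h : IsMeetingFamily θ X A) (hθ : ℵ₀ ≤ θ) (hθX : θ ≤ #X)
    (hA : #A ≤ #X) : ∃ B : Set (Set α), #B = #X ∧ IsMeetingFamily θ X B := by
  obtain ⟨B, hBP, hB⟩ := le_mk_iff_exists_subset.1 (mk_le_mk_setOf_subset_mk_eq hθ hθX)
  refine ⟨A ∪ B, le_antisymm ?_ (hB ▸ mk_le_mk_of_subset subset_union_right), h.union hBP⟩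
  calc #↥(A ∪ B) ≤ #A + #B := mk_union_le A B
    _ ≤ #X + #X := add_le_add hA hB.le
    _ = #X := add_eq_self (hθ.trans hθX)

end MeetingFamily

section Ordinals

open Ordinal Order

variable {θ : Cardinal.{u}} {γ : Ordinal.{u}}

theorem exists_isMeetingFamily_Iio_of_lt_cof (hθ : ℵ₀ ≤ θ) (hθγ : θ < γ.cof)
    (ih : ∀ δ < γ, θ ≤ δ.card → ∃ A : Set (Set Ordinal.{u}),
      #A ≤ lift.{u + 1} γ.card ∧ IsMeetingFamily (lift.{u + 1} θ) (Iio δ) A) :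
    ∃ A : Set (Set Ordinal.{u}),
      #A ≤ lift.{u + 1} γ.card ∧ IsMeetingFamily (lift.{u + 1} θ) (Iio γ) A := by
  have hγ : IsSuccLimit γ := one_lt_cof_iff.1 ((one_lt_aleph0.trans_le hθ).trans hθγ)
  let S : Set Ordinal.{u} := {δ | δ < γ ∧ θ ≤ δ.card}
  refine exists_isMeetingFamily_of_cover (ι := S) (X := fun δ => Iio δ.1)
    (aleph0_le_lift.2 (hθ.trans (hθγ.le.trans (cof_le_card γ))))
    ((mk_le_mk_of_subset fun δ hδ => hδ.1).trans (Cardinal.mk_Iio_ordinal γ).le)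
    (fun δ => ih δ.1 δ.2.1 δ.2.2) (fun δ => Iio_subset_Iio δ.2.1.le) fun b hb hbθ => ?_
  have hsup : sSup b < γ := sSup_lt_of_lt_cof (by rwa [hbθ, ← lift_cof, Cardinal.lift_lt]) hb
  have hbδ : b ⊆ Iio (succ (sSup b)) := fun x hx =>
    Order.lt_succ_iff.2 (le_csSup ⟨γ, fun y hy => (hb hy).le⟩ hx)
  have hθδ : θ ≤ (succ (sSup b)).card := by
    rw [← Cardinal.lift_le.{u + 1}, ← Cardinal.mk_Iio_ordinal, ← hbθ]
    exact mk_le_mk_of_subset hbδ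
  exact ⟨⟨_, hγ.succ_lt hsup, hθδ⟩, by rwa [inter_eq_left.2 hbδ]⟩

theorem exists_isMeetingFamily_Iio_of_cof_lt_cof (hθ : ℵ₀ ≤ θ) (hγ : IsSuccLimit γ)
    (hθγ : θ.ord < γ) (hcof : γ.cof < θ.ord.cof)
    (ih : ∀ δ < γ, θ ≤ δ.card → ∃ A : Set (Set Ordinal.{u}),
      #A ≤ lift.{u + 1} γ.card ∧ IsMeetingFamily (lift.{u + 1} θ) (Iio δ) A) :
    ∃ A : Set (Set Ordinal.{u}),
      #A ≤ lift.{u + 1} γ.card ∧ IsMeetingFamily (lift.{u + 1} θ) (Iio γ) A := by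
  obtain ⟨s, hs, hsγ⟩ := Order.exists_cof_eq (Iio γ)
  rw [cof_Iio, ← lift_cof] at hsγ
  let δ : s → Ordinal.{u} := fun y => max (succ y.1.1) θ.ord
  have hδγ : ∀ y, δ y < γ := fun y => max_lt (hγ.succ_lt y.1.2) hθγ
  refine exists_isMeetingFamily_of_cover (ι := s) (X := fun y => Iio (δ y))
    (aleph0_le_lift.2 (hθ.trans (ord_le.1 hθγ.le))) (hsγ ▸ Cardinal.lift_le.2 (cof_le_card γ))
    (fun y => ih (δ y) (hδγ y) (ord_le.1 (le_max_right _ _)))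
    (fun y => Iio_subset_Iio (hδγ y).le) fun b hb hbθ => ?_
  refine exists_mk_inter_eq_of_mk_lt_cof (aleph0_le_lift.2 hθ) ?_ (fun x hx => ?_) hbθ
  · rwa [hsγ, ← lift_ord, ← lift_cof, Cardinal.lift_lt]
  · obtain ⟨y, hy, hxy⟩ := hs ⟨x, hb hx⟩
    exact mem_iUnion.2 ⟨⟨y, hy⟩, (lt_succ_of_le (α := Ordinal) hxy).trans_le (le_max_left _ _)⟩

theorem exists_isMeetingFamily_Iio (hθ : ℵ₀ ≤ θ) (γ : Ordinal.{u}) (hθγ : θ ≤ γ.card)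
    (hcof : ∀ ν, θ < ν → ν ≤ γ.card → θ < ν.ord.cof ∨ ν.ord.cof < θ.ord.cof) :
    ∃ A : Set (Set Ordinal.{u}),
      #A ≤ lift.{u + 1} γ.card ∧ IsMeetingFamily (lift.{u + 1} θ) (Iio γ) A := by
  induction γ using WellFoundedLT.induction with | ind γ ih => ?_
  have ih' : ∀ δ < γ, θ ≤ δ.card → ∃ A : Set (Set Ordinal.{u}),
      #A ≤ lift.{u + 1} γ.card ∧ IsMeetingFamily (lift.{u + 1} θ) (Iio δ) A := fun δ hδ hθδ =>
    have hδγ := card_le_card hδ.le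
    let ⟨A, hA, h⟩ := ih δ hδ hθδ fun ν hθν hν => hcof ν hθν (hν.trans hδγ)
    ⟨A, hA.trans (Cardinal.lift_le.2 hδγ), h⟩
  rcases (ord_card_le γ).lt_or_eq with hlt | hinit
  · obtain ⟨A, hA, h⟩ := ih' _ hlt (by rwa [card_ord])
    obtain ⟨B, hB, hB'⟩ :=
      h.exists_of_mk_eq (Y := Iio γ) (by simp only [Cardinal.mk_Iio_ordinal, card_ord])
    exact ⟨B, hB.trans hA, hB'⟩
  rcases hθγ.eq_or_lt with hθeq | hθlt
  · refine ⟨{Iio γ}, ?_, .singleton (by rw [Cardinal.mk_Iio_ordinal, hθeq])⟩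
    simpa using one_le_aleph0.trans (aleph0_le_lift.2 (hθ.trans hθγ))
  rcases hcof γ.card hθlt le_rfl with hcof | hcof <;> rw [hinit] at hcof
  · exact exists_isMeetingFamily_Iio_of_lt_cof hθ hcof ih'
  · have hγ : IsSuccLimit γ := hinit ▸ isSuccLimit_ord (hθ.trans hθγ)
    exact exists_isMeetingFamily_Iio_of_cof_lt_cof hθ hγ (hinit ▸ ord_lt_ord.2 hθlt) hcof ih'

theorem lt_cof_or_cof_lt_cof_of_lt_aleph_add {θ ν : Cardinal.{u}} {α : Ordinal.{u}}
    (hθα : θ = ℵ_ α) (hθν : θ < ν) (hν : ν < ℵ_ (α + θ.ord.cof.ord)) :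
    θ < ν.ord.cof ∨ ν.ord.cof < θ.ord.cof := by
  obtain ⟨β, rfl⟩ := mem_range_aleph_iff.2 ((hθα ▸ aleph0_le_aleph α).trans hθν.le)
  subst hθα
  have hαβ : α < β := aleph_lt_aleph.1 hθν
  obtain ⟨ξ, rfl⟩ : ∃ ξ, β = α + ξ := ⟨β - α, (Ordinal.add_sub_cancel_of_le hαβ.le).symm⟩
  have hξ : ξ < (ℵ_ α).ord.cof.ord := (add_lt_add_iff_left α).1 (aleph_lt_aleph.1 hν)
  rcases zero_or_succ_or_isSuccLimit ξ with rfl | ⟨ζ, rfl⟩ | hlim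
  · exact absurd hαβ (by simp)
  · have hsucc : ℵ_ (α + succ ζ) = succ (ℵ_ (α + ζ)) := by
      rw [succ_eq_add_one ζ, ← add_assoc, succ_aleph]
    left
    rwa [hsucc, (isRegular_succ (aleph0_le_aleph _)).cof_ord, ← hsucc]
  · right
    rw [ord_aleph, cof_omega (isSuccLimit_add α hlim), cof_add α hlim.ne_bot]
    exact (cof_le_card ξ).trans_lt (lt_ord.1 hξ)

end Ordinals

/-- `θ^{+cf(θ)}` is written as `ℵ_{α + cf(θ)}`, where `θ = ℵ_α`. -/
theorem stmt5_general (θ lam : Cardinal.{0}) (α : Ordinal.{0})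
    (hθα : θ = Cardinal.aleph α)
    (hθlam : θ ≤ lam) (hbound : lam < Cardinal.aleph (α + (θ.ord.cof).ord)) :
    ∃ A : Set (Set Ordinal.{0}), #A = cl lam ∧
      (∀ a ∈ A, a ⊆ Set.Iio lam.ord ∧ #a = cl θ) ∧
      ∀ b ⊆ Set.Iio lam.ord, #b = cl θ → ∃ a ∈ A, #↥(a ∩ b) = cl θ := by
  have hθ : ℵ₀ ≤ θ := hθα ▸ aleph0_le_aleph α
  have hX : #(Iio lam.ord) = cl lam := by rw [Cardinal.mk_Iio_ordinal, card_ord]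
  obtain ⟨A, hA, hAmeet⟩ := exists_isMeetingFamily_Iio hθ lam.ord (by rwa [card_ord])
    fun ν hθν hν => lt_cof_or_cof_lt_cof_of_lt_aleph_add hθα hθν
      ((hν.trans_eq (card_ord lam)).trans_lt hbound)
  rw [card_ord] at hA
  obtain ⟨B, hB, hBmeet⟩ :=
    hAmeet.exists_mk_eq (aleph0_le_lift.2 hθ) (hX ▸ lift_le.2 hθlam) (hX ▸ hA)
  exact ⟨B, hX ▸ hB, fun a ha => ⟨hBmeet.subset a ha, hBmeet.mk_eq a ha⟩,
    hBmeet.exists_mk_inter_eq⟩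

/-- For infinite cardinals `θ ≤ lam < θ^{+cf(θ)}`, `m(lam, θ) = lam`:
there is a meeting family for `[lam]^θ` of size `lam`. Here `θ = ℵ_α` and
`θ^{+cf(θ)} = ℵ_{α + cf(θ)}`. -/
theorem stmt5 (θ lam : Cardinal.{0}) (α : Ordinal.{0}) (hθ : ℵ₀ ≤ θ)
    (hθα : θ = Cardinal.aleph α)
    (hθlam : θ ≤ lam) (hbound : lam < Cardinal.aleph (α + (θ.ord.cof).ord)) :
    ∃ A : Set (Set Ordinal.{0}), #A = cl lam ∧
      (∀ a ∈ A, a ⊆ Set.Iio lam.ord ∧ #a = cl θ) ∧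
      ∀ b ⊆ Set.Iio lam.ord, #b = cl θ → ∃ a ∈ A, #↥(a ∩ b) = cl θ :=
  stmt5_general θ lam α hθα hθlam hbound

end LadderPaper
end

section
/- Let κ be regular uncountable, S ⊆ κ stationary, λ < κ an infinite cardinal, and L a ladder system over S. If ◊(L, 2^λ, 2^λ) holds and onto({λ}, [2^λ]^{≤λ}, θ) holds for a cardinal θ, then Φ(L, 2^λ, θ) holds. -/
open Cardinal Set

namespace LadderPaper

/-!
Code `λ` functions `κ → 2^λ` as a single one, using `(2^λ)^λ = 2^λ`, and let the diamond sequence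
guess the coded function. At `δ ∈ S` the fewer than `2^λ` guesses in `P δ`, decoded and fed to
`F`, give fewer than `2^λ` targets `m : λ → θ`. By the onto property at most `λ` columns `ε` miss a
given target (`c α ε ≠ m α` for all `α`), so some column `e δ` hits every target. Now one of the
`λ` candidates `g = c α ∘ e` works: otherwise choose for each `α` a counterexample `f_α`. The
diamond guesses the code of `(f_α)_α` on a stationary set, each of whose points lies in the
agreement set of some `f_α`; since the nonstationary ideal is `κ`-complete and `λ < κ`, one of
these agreement sets is stationary.
-/

universe u

theorem isClubIn_iff {C : Set Ordinal} {o : Ordinal} :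
    IsClubIn C o ↔ C ⊆ Iio o ∧ IsClub (Subtype.val ⁻¹' C : Set (Iio o)) := by
  rw [isClub_iff, dirSupClosed_iff_of_linearOrder]
  refine ⟨fun ⟨hCo, hcof, hclosed⟩ => ⟨hCo, ?_, ?_⟩, fun ⟨hCo, hclosed, hcof⟩ => ⟨hCo, ?_, ?_⟩⟩
  · intro d hdC ⟨x, hx⟩ a ha
    by_cases had : a ∈ d
    · exact hdC had
    refine hclosed a a.2 (zero_le.trans_lt (ha.1 hx |>.lt_of_ne fun h => had (h ▸ hx))) ?_
    intro β hβ
    obtain ⟨γ, hγd, hβγ, hγa⟩ := ha.exists_between' had (b := ⟨β, hβ.trans a.2⟩) hβ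
    exact ⟨γ, hdC hγd, hβγ, hγa⟩
  · intro ⟨α, hα⟩
    obtain ⟨β, hβC, hαβ⟩ := hcof α hα
    exact ⟨⟨β, hCo hβC⟩, hβC, hαβ⟩
  · intro α hα
    obtain ⟨⟨β, _⟩, hβC, hαβ⟩ := hcof ⟨α, hα⟩
    exact ⟨β, hβC, hαβ⟩
  · intro α hα hα0 hlim
    obtain ⟨γ₀, hγ₀C, -, hγ₀α⟩ := hlim 0 hα0
    refine hclosed (d := {x | x.1 ∈ C ∧ x.1 < α}) (fun x hx => hx.1)
      ⟨⟨γ₀, hCo hγ₀C⟩, hγ₀C, hγ₀α⟩ (a := ⟨α, hα⟩) ⟨fun x hx => hx.2.le, fun b hb => ?_⟩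
    by_contra! hbα
    obtain ⟨γ, hγC, hbγ, hγα⟩ := hlim b.1 hbα
    exact (hb (a := ⟨γ, hCo hγC⟩) ⟨hγC, hγα⟩).not_gt hbγ

theorem isStationaryIn_iff {T : Set Ordinal} {o : Ordinal} :
    IsStationaryIn T o ↔ T ⊆ Iio o ∧ IsStationary (Subtype.val ⁻¹' T : Set (Iio o)) := by
  refine ⟨fun ⟨hTo, hT⟩ => ⟨hTo, fun t ht => ?_⟩, fun ⟨hTo, hT⟩ => ⟨hTo, fun C hC => ?_⟩⟩
  · have hclub : IsClubIn (Subtype.val '' t) o := by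
      rw [isClubIn_iff, Subtype.val_injective.preimage_image]
      exact ⟨fun _ ⟨x, _, hx⟩ => hx ▸ x.2, ht⟩
    obtain ⟨_, hxT, x, hxt, rfl⟩ := hT _ hclub
    exact ⟨x, hxT, hxt⟩
  · obtain ⟨x, hxT, hxC⟩ := hT (isClubIn_iff.1 hC).2
    exact ⟨x, hxT, hxC⟩

theorem IsStationaryIn.mono {T T' : Set Ordinal} {o : Ordinal} (hT : IsStationaryIn T o)
    (hTT' : T ⊆ T') (hT' : T' ⊆ Iio o) : IsStationaryIn T' o :=
  ⟨hT', fun C hC => (hT.2 C hC).mono (inter_subset_inter_left C hTT')⟩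

theorem cof_Iio_ord_of_isRegular {κ : Cardinal.{u}} (hκ : κ.IsRegular) :
    Order.cof (Iio κ.ord) = Cardinal.lift.{u + 1} κ := by
  rw [Ordinal.cof_Iio, ← Ordinal.lift_cof, hκ.cof_ord]

theorem IsStationaryIn.exists_isStationaryIn_inter {κ : Cardinal.{u}} (hκ : κ.IsRegular)
    (hκ₀ : ℵ₀ < κ) {T : Set Ordinal.{u}} (hT : IsStationaryIn T κ.ord) {o : Ordinal.{u}}
    (ho : o.card < κ) (X : Ordinal → Set Ordinal) (hTX : ∀ δ ∈ T, ∃ a < o, δ ∈ X a) :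
    ∃ a < o, IsStationaryIn (T ∩ X a) κ.ord := by
  rw [isStationaryIn_iff] at hT
  have hcover :
      Subtype.val ⁻¹' T ⊆ ⋃ a : Iio o, (Subtype.val ⁻¹' (T ∩ X a) : Set (Iio κ.ord)) := by
    intro δ hδ
    obtain ⟨a, ha, hδa⟩ := hTX δ hδ
    exact mem_iUnion.2 ⟨⟨a, ha⟩, hδ, hδa⟩
  have hcof_ne : Order.cof (Iio κ.ord) ≠ ℵ₀ := by
    simpa [cof_Iio_ord_of_isRegular hκ] using hκ₀.ne'
  have hcard : Cardinal.lift.{u + 1} #(Iio o) < Cardinal.lift.{u + 1} (Order.cof (Iio κ.ord)) := by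
    rw [Cardinal.mk_Iio_ordinal, cof_Iio_ord_of_isRegular hκ]
    exact Cardinal.lift_strictMono (Cardinal.lift_strictMono ho)
  obtain ⟨⟨a, ha⟩, hstat⟩ := (isStationary_iUnion_iff hcof_ne hcard).1 (hT.2.mono hcover)
  exact ⟨a, ha, isStationaryIn_iff.2 ⟨inter_subset_left.trans hT.1, hstat⟩⟩

theorem exists_code_decode {lam μ : Cardinal.{u}} (hμ : μ ^ lam = μ) (hμ₀ : μ ≠ 0) :
    ∃ (code : (Ordinal.{u} → Ordinal.{u}) → Ordinal.{u}) (decode : Ordinal → Ordinal → Ordinal),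
      (∀ m, code m < μ.ord) ∧ (∀ β a, decode β a < μ.ord) ∧
        ∀ m, (∀ a < lam.ord, m a < μ.ord) → ∀ a < lam.ord, decode (code m) a = m a := by
  have hμ_pos : 0 < μ.ord := Cardinal.ord_pos.2 (pos_iff_ne_zero.2 hμ₀)
  obtain ⟨E⟩ : Nonempty ((Iio lam.ord → Iio μ.ord) ≃ Iio μ.ord) := by
    rw [← Cardinal.eq, ← Cardinal.power_def, Cardinal.mk_Iio_ordinal, Cardinal.mk_Iio_ordinal,
      Cardinal.card_ord, Cardinal.card_ord, ← Cardinal.lift_power, hμ]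
  let trunc : Ordinal → Iio μ.ord := fun β => if h : β < μ.ord then ⟨β, h⟩ else ⟨0, hμ_pos⟩
  have htrunc : ∀ β (h : β < μ.ord), trunc β = ⟨β, h⟩ := fun β h => dif_pos h
  refine ⟨fun m => E fun a => trunc (m a),
    fun β a => if h : a < lam.ord then E.symm (trunc β) ⟨a, h⟩ else 0,
    fun m => (E _).2, fun β a => ?_, fun m hm a ha => ?_⟩
  · dsimp only
    split_ifs
    exacts [Subtype.coe_prop _, hμ_pos]
  · simp only [dif_pos ha, htrunc _ (E _).2, Subtype.coe_eta, E.symm_apply_apply,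
      htrunc _ (hm a ha)]

/-- The surjectivity clause of `onto({λ}, [o]^{≤λ}, θ)`, witnessed by the rows `c α`, `α < λ`. -/
def IsOntoColouring (lam θ : Cardinal.{u}) (o : Ordinal.{u})
    (c : Ordinal.{u} → Ordinal.{u} → Ordinal.{u}) : Prop :=
  ∀ B ⊆ Iio o, #B = Cardinal.lift.{u + 1} (Order.succ lam) →
    ∃ α < lam.ord, ∀ τ < θ.ord, ∃ β ∈ B, c α β = τ

theorem IsOntoColouring.mk_setOf_forall_ne_le {lam θ : Cardinal.{u}} {o : Ordinal.{u}}
    {c : Ordinal → Ordinal → Ordinal} (hc : IsOntoColouring lam θ o c) {m : Ordinal → Ordinal}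
    (hm : ∀ a < lam.ord, m a < θ.ord) :
    #{β ∈ Iio o | ∀ a < lam.ord, c a β ≠ m a} ≤ Cardinal.lift.{u + 1} lam := by
  by_contra! hbig
  obtain ⟨B, hB, hBcard⟩ : ∃ B ⊆ {β ∈ Iio o | ∀ a < lam.ord, c a β ≠ m a},
      #B = Cardinal.lift.{u + 1} (Order.succ lam) := by
    rw [← Cardinal.le_mk_iff_exists_subset, Cardinal.lift_succ]
    exact Order.succ_le_of_lt hbig
  obtain ⟨α, hα, hsurj⟩ := hc B (fun β hβ => (hB hβ).1) hBcard
  obtain ⟨β, hβB, hβ⟩ := hsurj (m α) (hm α hα)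
  exact (hB hβB).2 α hα hβ

theorem IsOntoColouring.exists_forall_exists_eq {lam θ : Cardinal.{u}} {o : Ordinal.{u}}
    {c : Ordinal → Ordinal → Ordinal} (hc : IsOntoColouring lam θ o c) (ho : ℵ₀ ≤ o.card)
    (hlam : lam < o.card) (Q : Set (Ordinal → Ordinal))
    (hQ : #Q < Cardinal.lift.{u + 1} o.card) (hQθ : ∀ m ∈ Q, ∀ a < lam.ord, m a < θ.ord) :
    ∃ ε < o, ∀ m ∈ Q, ∃ a < lam.ord, c a ε = m a := by
  set missed := ⋃ m ∈ Q, {β ∈ Iio o | ∀ a < lam.ord, c a β ≠ m a}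
  have hmissed : #missed < #(Iio o) := calc
    #missed ≤ #Q * Cardinal.lift.{u + 1} lam :=
      (Cardinal.mk_biUnion_le _ Q).trans <| mul_le_mul_right (ciSup_le' fun m =>
        hc.mk_setOf_forall_ne_le (hQθ _ m.2)) _
    _ < #(Iio o) := by
      rw [Cardinal.mk_Iio_ordinal]
      exact Cardinal.mul_lt_of_lt (Cardinal.aleph0_le_lift.2 ho) hQ (Cardinal.lift_strictMono hlam)
  obtain ⟨ε, hεo, hε⟩ := not_subset.1 fun h => (Cardinal.mk_le_mk_of_subset h).not_gt hmissed
  refine ⟨ε, hεo, fun m hm => ?_⟩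
  by_contra! hne
  exact hε (mem_biUnion hm ⟨hεo, hne⟩)

theorem IsOntoColouring.exists_fun_forall_exists_eq {lam θ : Cardinal.{u}}
    {o : Ordinal.{u}} {c : Ordinal → Ordinal → Ordinal} (hc : IsOntoColouring lam θ o c)
    (ho : ℵ₀ ≤ o.card) (hlam : lam < o.card) (S : Set Ordinal.{u})
    (Q : Ordinal.{u} → Set (Ordinal → Ordinal))
    (hQ : ∀ δ ∈ S, #(Q δ) < Cardinal.lift.{u + 1} o.card)
    (hQθ : ∀ δ ∈ S, ∀ m ∈ Q δ, ∀ a < lam.ord, m a < θ.ord) :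
    ∃ e : Ordinal → Ordinal, (∀ δ, e δ < o) ∧
      ∀ δ ∈ S, ∀ m ∈ Q δ, ∃ a < lam.ord, c a (e δ) = m a := by
  have ho_pos : 0 < o := pos_iff_ne_zero.2 fun h => by simp [h] at hlam
  have he : ∀ δ, ∃ ε < o, δ ∈ S → ∀ m ∈ Q δ, ∃ a < lam.ord, c a ε = m a := fun δ => by
    by_cases hδ : δ ∈ S
    · obtain ⟨ε, hε, hhit⟩ := hc.exists_forall_exists_eq ho hlam (Q δ) (hQ δ hδ) (hQθ δ hδ)
      exact ⟨ε, hε, fun _ => hhit⟩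
    · exact ⟨0, ho_pos, fun h => absurd h hδ⟩
  choose e he_lt he using he
  exact ⟨e, he_lt, fun δ hδ => he δ hδ⟩

/-- If `◊(L, 2^lam, 2^lam)` holds for a ladder system `A` over a stationary
`S ⊆ κ` with `lam < κ`, and `onto({lam}, [2^lam]^{≤lam}, θ)` holds, then `Φ(L, 2^lam, θ)`
holds. -/
theorem stmt6 (κ lam θ : Cardinal.{0}) (hκreg : κ.IsRegular) (hκunc : ℵ₀ < κ)
    (hlam : ℵ₀ ≤ lam) (hlamκ : lam < κ)
    (S : Set Ordinal.{0}) (A : Ordinal.{0} → Set Ordinal.{0}) (hL : IsLadderOn κ.ord S A)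
    (hdiamond : ∃ P : ∀ δ : Ordinal.{0}, Set (↥(A δ) → Ordinal.{0}),
      (∀ δ ∈ S, #(P δ) < cl ((2 : Cardinal) ^ lam)) ∧
      (∀ δ ∈ S, ∀ p ∈ P δ, ∀ x, p x < ((2 : Cardinal) ^ lam).ord) ∧
      ∀ f : Ordinal.{0} → Ordinal.{0}, (∀ α < κ.ord, f α < ((2 : Cardinal) ^ lam).ord) →
        IsStationaryIn {δ ∈ S | (A δ).restrict f ∈ P δ} κ.ord)
    (honto : ∃ c : Ordinal.{0} → Ordinal.{0} → Ordinal.{0},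
      (∀ α < lam.ord, ∀ β < ((2 : Cardinal) ^ lam).ord, c α β < θ.ord) ∧
      ∀ B ⊆ Set.Iio ((2 : Cardinal) ^ lam).ord, #B = cl (Order.succ lam) →
        ∃ α < lam.ord, ∀ τ < θ.ord, ∃ β ∈ B, c α β = τ) :
    ∀ F : ∀ δ : Ordinal.{0}, (↥(A δ) → Ordinal.{0}) → Ordinal.{0},
      (∀ δ ∈ S, ∀ p : ↥(A δ) → Ordinal.{0},
        (∀ x, p x < ((2 : Cardinal) ^ lam).ord) → F δ p < θ.ord) →
      ∃ g : Ordinal.{0} → Ordinal.{0}, (∀ δ ∈ S, g δ < θ.ord) ∧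
        ∀ f : Ordinal.{0} → Ordinal.{0}, (∀ α < κ.ord, f α < ((2 : Cardinal) ^ lam).ord) →
          IsStationaryIn {δ ∈ S | F δ ((A δ).restrict f) = g δ} κ.ord := by
  intro F hF
  obtain ⟨hS, hA⟩ := hL
  obtain ⟨P, hPcard, -, hPguess⟩ := hdiamond
  obtain ⟨c, hclt, hc : IsOntoColouring lam θ _ c⟩ := honto
  obtain ⟨code, decode, hcode, hdecode, hdecode_code⟩ := exists_code_decode (lam := lam)
    (μ := 2 ^ lam) (by rw [← Cardinal.power_mul, Cardinal.mul_eq_self hlam])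
    (Cardinal.power_pos _ two_pos).ne'
  obtain ⟨e, he_lt, he⟩ := hc.exists_fun_forall_exists_eq
    (by rw [Cardinal.card_ord]; exact hlam.trans (Cardinal.cantor lam).le)
    (by rw [Cardinal.card_ord]; exact Cardinal.cantor lam) S
    (fun δ => (fun q a => F δ fun x => decode (q x) a) '' P δ)
    (fun δ hδ => by rw [Cardinal.card_ord]; exact Cardinal.mk_image_le.trans_lt (hPcard δ hδ))
    (by rintro δ hδ _ ⟨q, -, rfl⟩ a -; exact hF δ hδ _ fun x => hdecode _ _)
  by_contra! hcon
  have hcounter : ∀ a < lam.ord, ∃ f : Ordinal → Ordinal,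
      (∀ α < κ.ord, f α < ((2 : Cardinal) ^ lam).ord) ∧
        ¬ IsStationaryIn {δ ∈ S | F δ ((A δ).domRestrict f) = c a (e δ)} κ.ord :=
    fun a ha => hcon _ fun δ _ => hclt a ha _ (he_lt δ)
  choose! f hf hf_bad using hcounter
  set coded : Ordinal → Ordinal := fun β => code fun a => f a β
  have hcover : ∀ δ ∈ {δ ∈ S | (A δ).domRestrict coded ∈ P δ}, ∃ a < lam.ord,
      δ ∈ {δ ∈ S | F δ ((A δ).domRestrict (f a)) = c a (e δ)} := by
    rintro δ ⟨hδS, hδP⟩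
    obtain ⟨a, ha, hhit⟩ := he δ hδS _ ⟨_, hδP, rfl⟩
    refine ⟨a, ha, hδS, hhit ▸ congrArg (F δ) (funext fun x => ?_)⟩
    exact (hdecode_code _ (fun b hb => hf b hb x (((hA δ hδS).1 x.2).trans (hS.1 hδS))) a ha).symm
  obtain ⟨a, ha, hstat⟩ := (hPguess coded fun _ _ => hcode _).exists_isStationaryIn_inter
    hκreg hκunc (o := lam.ord) (by rwa [Cardinal.card_ord]) _ hcover
  exact hf_bad a ha (hstat.mono inter_subset_right fun δ hδ => hS.1 hδ.1)

end LadderPaper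
end

section
/- Suppose θ ≤ λ are infinite cardinals with λ^θ = λ. Then there is a proper θ⁺-complete ideal I on λ and a colouring c : λ × 2^λ → θ such that for every A ⊆ λ with A ∉ I and every B ⊆ 2^λ with |B| = θ, there exists α ∈ A with c[{α} × B] = θ. -/
open Cardinal Set

namespace LadderPaper

open Function in
/-- If `#β ≤ #α` and `β` is nonempty, there is a surjection from `α` onto `β`. -/
lemma exists_surjish {α β : Type u} [Nonempty β] (h : #β ≤ #α) :
    ∃ f : α → β, Surjective f := by
  obtain ⟨e⟩ := Cardinal.le_def β α |>.mp h
  exact ⟨Function.invFun e, Function.invFun_surjective e.injective⟩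

/-- Greedy choice of pairwise distinct representatives from `θ` many sets,
each of size at least `θ`. -/
lemma greedy_pick (θ : Cardinal.{0}) (F : Ordinal.{0} → Set Ordinal.{0})
    (hF : ∀ ξ < θ.ord, Cardinal.lift.{1} θ ≤ #(F ξ)) :
    ∃ pick : Ordinal.{0} → Ordinal.{0},
      (∀ ξ < θ.ord, pick ξ ∈ F ξ) ∧ Set.InjOn pick (Set.Iio θ.ord) := by
  have key : ∀ ξ, ξ < θ.ord → ∀ IH : ∀ ζ, ζ < ξ → Ordinal.{0},
      (F ξ \ {v | ∃ ζ, ∃ h : ζ < ξ, IH ζ h = v}).Nonempty := by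
    intro ξ hξ IH
    rw [Set.nonempty_iff_ne_empty]
    intro hemp
    have hsub : F ξ ⊆ {v | ∃ ζ, ∃ h : ζ < ξ, IH ζ h = v} := by
      intro v hv
      by_contra hv'
      exact Set.eq_empty_iff_forall_notMem.mp hemp v ⟨hv, hv'⟩
    have h1 : #({v | ∃ ζ, ∃ h : ζ < ξ, IH ζ h = v} : Set Ordinal)
        ≤ #(Set.Iio ξ) := by
      have : {v | ∃ ζ, ∃ h : ζ < ξ, IH ζ h = v}
          = Set.range (fun p : (Set.Iio ξ) => IH p.1 p.2) := by
        ext v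
        constructor
        · rintro ⟨ζ, h, rfl⟩; exact ⟨⟨ζ, h⟩, rfl⟩
        · rintro ⟨⟨ζ, h⟩, rfl⟩; exact ⟨ζ, h, rfl⟩
      rw [this]
      exact mk_range_le
    have h2 : #(Set.Iio ξ) < Cardinal.lift.{1} θ := by
      rw [Ordinal.mk_Iio_ordinal]
      exact Cardinal.lift_lt.2 (Cardinal.lt_ord.mp hξ)
    exact absurd ((hF ξ hξ).trans (mk_le_mk_of_subset hsub)) (not_le.2 (h1.trans_lt h2))
  set pick : Ordinal.{0} → Ordinal.{0} :=
    WellFounded.fix Ordinal.lt_wf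
      (fun ξ IH => if h : ξ < θ.ord then (key ξ h IH).some else 0) with hpick
  have hfix : ∀ ξ, pick ξ =
      if h : ξ < θ.ord then (key ξ h (fun ζ _ => pick ζ)).some else 0 := by
    intro ξ
    rw [hpick]
    exact WellFounded.fix_eq _ _ ξ
  have hmem : ∀ ξ, (h : ξ < θ.ord) →
      pick ξ ∈ F ξ \ {v | ∃ ζ, ∃ h : ζ < ξ, pick ζ = v} := by
    intro ξ h
    have := (key ξ h (fun ζ _ => pick ζ)).some_mem
    rwa [hfix ξ, dif_pos h]
  refine ⟨pick, fun ξ hξ => (hmem ξ hξ).1, ?_⟩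
  intro ζ hζ ξ hξ hne
  by_contra h
  rcases lt_or_gt_of_ne h with h' | h'
  · exact (hmem ξ hξ).2 ⟨ζ, h', hne⟩
  · exact (hmem ζ hζ).2 ⟨ξ, h', hne.symm⟩

open Function in
/-- The Engelking–Karłowicz style density lemma. -/
lemma EK_dense {L X T : Type u} [Nonempty L] [Nonempty T] (e : X ↪ (L → Bool))
    (G : L → (T → L) × (T → T → Bool) × (T → T)) (hG : Surjective G)
    (pT : T → T × T) (hpT : Surjective pT) :
    ∃ f : L → X → T, ∀ x : T → X, Injective x → ∀ g : T → T,
      ∃ α, ∀ i, f α (x i) = g i := by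
  classical
  refine ⟨fun α x =>
    if hx : ∃ i, (fun j => e x ((G α).1 j)) = (G α).2.1 i
    then (G α).2.2 hx.choose else Classical.arbitrary T, ?_⟩
  intro x hx g
  have hsep : ∀ k : T, (pT k).1 ≠ (pT k).2 →
      ∃ ℓ, e (x (pT k).1) ℓ ≠ e (x (pT k).2) ℓ := by
    intro k hk
    exact Function.ne_iff.mp (fun h => hk (hx (e.injective h)))
  set sep : T → L := fun k =>
    if h : ∃ ℓ, e (x (pT k).1) ℓ ≠ e (x (pT k).2) ℓ
    then h.choose else Classical.arbitrary L with hsepdef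
  set t : T → T → Bool := fun i j => e (x i) (sep j) with htdef
  have tinj : Injective t := by
    intro i i' hii
    by_contra hne
    obtain ⟨k, hk⟩ := hpT (i, i')
    have hk1 : (pT k).1 = i := by rw [hk]
    have hk2 : (pT k).2 = i' := by rw [hk]
    have hcond : ∃ ℓ, e (x (pT k).1) ℓ ≠ e (x (pT k).2) ℓ := by
      apply hsep
      rw [hk1, hk2]; exact hne
    have hspec := hcond.choose_spec
    have hsepk : sep k = hcond.choose := by rw [hsepdef]; exact dif_pos hcond
    rw [← hsepk] at hspec
    rw [hk1, hk2] at hspec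
    exact hspec (congrFun hii k)
  obtain ⟨α, hα⟩ := hG (sep, t, g)
  refine ⟨α, fun i => ?_⟩
  show (if hc : ∃ i', (fun j => e (x i) ((G α).1 j)) = (G α).2.1 i'
    then (G α).2.2 hc.choose else Classical.arbitrary T) = g i
  rw [hα]
  have hc : ∃ i', (fun j => e (x i) (sep j)) = t i' := ⟨i, rfl⟩
  rw [dif_pos hc]
  have : t hc.choose = t i := hc.choose_spec.symm
  rw [tinj this]

/-- If `θ ≤ lam` are infinite with `lam^θ = lam`, then there is a proper
`θ⁺`-complete ideal `I` on `lam` and a colouring `c : lam × 2^lam → θ` witnessing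
`onto(I⁺, [2^lam]^{<θ}, θ)`. -/
theorem stmt9 (θ lam : Cardinal.{0}) (hθ : ℵ₀ ≤ θ) (hθlam : θ ≤ lam)
    (hpow : lam ^ θ = lam) :
    ∃ (I : Set (Set Ordinal.{0})) (c : Ordinal.{0} → Ordinal.{0} → Ordinal.{0}),
      (∀ a ∈ I, a ⊆ Set.Iio lam.ord) ∧ (∅ ∈ I) ∧
      (∀ a ∈ I, ∀ b ⊆ a, b ∈ I) ∧
      (∀ G : Set (Set Ordinal.{0}), G ⊆ I → #G ≤ cl θ → ⋃₀ G ∈ I) ∧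
      Set.Iio lam.ord ∉ I ∧
      (∀ α < lam.ord, ∀ β < ((2 : Cardinal) ^ lam).ord, c α β < θ.ord) ∧
      ∀ A ⊆ Set.Iio lam.ord, A ∉ I →
        ∀ B ⊆ Set.Iio ((2 : Cardinal) ^ lam).ord, #B = cl θ →
          ∃ α ∈ A, ∀ τ < θ.ord, ∃ β ∈ B, c α β = τ := by
  classical
  have hlam : ℵ₀ ≤ lam := hθ.trans hθlam
  set Lo := lam.ord with hLo
  set Xo := ((2 : Cardinal) ^ lam).ord with hXo
  set To := θ.ord with hTo
  have mkL : #(Set.Iio Lo) = Cardinal.lift.{1} lam := by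
    rw [Ordinal.mk_Iio_ordinal, hLo, Cardinal.card_ord]
  have mkX : #(Set.Iio Xo) = Cardinal.lift.{1} ((2 : Cardinal) ^ lam) := by
    rw [Ordinal.mk_Iio_ordinal, hXo, Cardinal.card_ord]
  have mkT : #(Set.Iio To) = Cardinal.lift.{1} θ := by
    rw [Ordinal.mk_Iio_ordinal, hTo, Cardinal.card_ord]
  have haleT : ℵ₀ ≤ Cardinal.lift.{1} θ := Cardinal.aleph0_le_lift.2 hθ
  have haleL : ℵ₀ ≤ Cardinal.lift.{1} lam := Cardinal.aleph0_le_lift.2 hlam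
  haveI nT : Nonempty ↥(Set.Iio To) := by
    rw [← Cardinal.mk_ne_zero_iff, mkT]
    exact (haleT.trans_lt' aleph0_pos).ne'
  haveI nL : Nonempty ↥(Set.Iio Lo) := by
    rw [← Cardinal.mk_ne_zero_iff, mkL]
    exact (haleL.trans_lt' aleph0_pos).ne'
  -- the embedding e : X ↪ (L → Bool)
  have hXcard : #(Set.Iio Xo) = #(↥(Set.Iio Lo) → Bool) := by
    rw [mkX, Cardinal.mk_arrow, mk_bool, mkL, Cardinal.lift_two, Cardinal.lift_id',
      Cardinal.lift_power, Cardinal.lift_two]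
  obtain ⟨eqv⟩ := Cardinal.eq.mp hXcard
  set e : ↥(Set.Iio Xo) ↪ (↥(Set.Iio Lo) → Bool) := eqv.toEmbedding with he
  -- cardinal computations for the triple space
  have hLpowT : Cardinal.lift.{1} lam ^ Cardinal.lift.{1} θ = Cardinal.lift.{1} lam := by
    rw [← Cardinal.lift_power, hpow]
  have htwoL : (2 : Cardinal.{1}) ≤ Cardinal.lift.{1} lam := by
    exact (Cardinal.nat_lt_aleph0 2).le.trans haleL |>.trans_eq' (by norm_num)
  have harrow1 : #(↥(Set.Iio To) → ↥(Set.Iio Lo)) = Cardinal.lift.{1} lam := by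
    rw [← Cardinal.power_def, mkL, mkT, hLpowT]
  have harrow2 : #(↥(Set.Iio To) → ↥(Set.Iio To) → Bool) ≤ Cardinal.lift.{1} lam := by
    rw [← Cardinal.power_def, Cardinal.mk_arrow, mk_bool, Cardinal.lift_two,
      Cardinal.lift_id', mkT, ← Cardinal.power_mul, Cardinal.mul_eq_self haleT]
    calc (2 : Cardinal.{1}) ^ Cardinal.lift.{1} θ
        ≤ Cardinal.lift.{1} lam ^ Cardinal.lift.{1} θ := Cardinal.power_le_power_right htwoL
      _ = _ := hLpowT
  have harrow3 : #(↥(Set.Iio To) → ↥(Set.Iio To)) ≤ Cardinal.lift.{1} lam := by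
    rw [← Cardinal.power_def, mkT]
    calc Cardinal.lift.{1} θ ^ Cardinal.lift.{1} θ
        ≤ Cardinal.lift.{1} lam ^ Cardinal.lift.{1} θ :=
          Cardinal.power_le_power_right (Cardinal.lift_le.2 hθlam)
      _ = _ := hLpowT
  have htriple : #((↥(Set.Iio To) → ↥(Set.Iio Lo)) ×
      (↥(Set.Iio To) → ↥(Set.Iio To) → Bool) × (↥(Set.Iio To) → ↥(Set.Iio To)))
      ≤ #(↥(Set.Iio Lo)) := by
    rw [mkL, Cardinal.mk_prod, Cardinal.mk_prod]
    simp only [Cardinal.lift_id]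
    calc #(↥(Set.Iio To) → ↥(Set.Iio Lo)) *
        (#(↥(Set.Iio To) → ↥(Set.Iio To) → Bool) * #(↥(Set.Iio To) → ↥(Set.Iio To)))
        ≤ Cardinal.lift.{1} lam * (Cardinal.lift.{1} lam * Cardinal.lift.{1} lam) := by
          exact mul_le_mul' harrow1.le (mul_le_mul' harrow2 harrow3)
      _ = Cardinal.lift.{1} lam := by
          rw [Cardinal.mul_eq_self haleL, Cardinal.mul_eq_self haleL]
  obtain ⟨G, hG⟩ := exists_surjish htriple
  -- surjection onto pairs
  have hpairs : #(↥(Set.Iio To) × ↥(Set.Iio To)) ≤ #(↥(Set.Iio To)) := by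
    rw [Cardinal.mk_prod, Cardinal.lift_id, mkT, Cardinal.mul_eq_self haleT]
  obtain ⟨pT, hpT⟩ := exists_surjish hpairs
  -- the colouring
  obtain ⟨f, hf⟩ := EK_dense e G hG pT hpT
  set c : Ordinal.{0} → Ordinal.{0} → Ordinal.{0} := fun a b =>
    if ha : a < Lo then if hb : b < Xo
      then ((f ⟨a, ha⟩ ⟨b, hb⟩ : ↥(Set.Iio To)) : Ordinal) else 0 else 0 with hcdef
  have hcval : ∀ a, (ha : a < Lo) → ∀ b, (hb : b < Xo) →
      c a b = ((f ⟨a, ha⟩ ⟨b, hb⟩ : ↥(Set.Iio To)) : Ordinal) := by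
    intro a ha b hb
    simp only [hcdef]
    rw [dif_pos ha, dif_pos hb]
  -- the ideal
  set I : Set (Set Ordinal.{0}) := {A | A ⊆ Set.Iio Lo ∧
    ∃ 𝓑 : Set (Set Ordinal.{0}), #𝓑 ≤ Cardinal.lift.{1} θ ∧
      (∀ B ∈ 𝓑, B ⊆ Set.Iio Xo ∧ #B = Cardinal.lift.{1} θ) ∧
      ∀ a ∈ A, ∃ B ∈ 𝓑, ¬ ∀ τ < To, ∃ b ∈ B, c a b = τ} with hI
  refine ⟨I, c, ?_, ?_, ?_, ?_, ?_, ?_, ?_⟩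
  · -- subsets of Iio Lo
    exact fun a ha => ha.1
  · -- empty set
    refine ⟨Set.empty_subset _, ∅, ?_, ?_, ?_⟩
    · simp
    · simp
    · simp
  · -- downward closed
    rintro a ⟨hsub, 𝓑, h1, h2, h3⟩ b hba
    exact ⟨hba.trans hsub, 𝓑, h1, h2, fun x hx => h3 x (hba hx)⟩
  · -- θ⁺-completeness
    intro G' hG' hcard
    choose W hW1 hW2 hW3 using fun a : ↥G' => (hG' a.2).2
    refine ⟨?_, ⋃ a : ↥G', W a, ?_, ?_, ?_⟩
    · intro x hx
      obtain ⟨a, haG, hxa⟩ := hx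
      exact (hG' haG).1 hxa
    · calc #(⋃ a : ↥G', W a) ≤ #(↥G') * ⨆ a : ↥G', #(W a) := Cardinal.mk_iUnion_le _
        _ ≤ Cardinal.lift.{1} θ * Cardinal.lift.{1} θ :=
            mul_le_mul' hcard (ciSup_le' fun a => hW1 a)
        _ = Cardinal.lift.{1} θ := Cardinal.mul_eq_self haleT
    · intro B hB
      obtain ⟨a, haB⟩ := Set.mem_iUnion.mp hB
      exact hW2 a B haB
    · intro x hx
      obtain ⟨a, haG', hxa⟩ := hx
      obtain ⟨B, hB, hnB⟩ := hW3 ⟨a, haG'⟩ x hxa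
      exact ⟨B, Set.mem_iUnion.mpr ⟨⟨a, haG'⟩, hB⟩, hnB⟩
  · -- properness
    rintro ⟨-, 𝓑, hc𝓑, hB𝓑, hfail⟩
    have hLopos : (0 : Ordinal) < Lo := by
      rw [hLo, Cardinal.lt_ord]
      simpa using aleph0_pos.trans_le hlam
    obtain ⟨B₀, hB₀, -⟩ := hfail 0 hLopos
    haveI : Nonempty ↥𝓑 := ⟨⟨B₀, hB₀⟩⟩
    have hpq : #(↥𝓑 × ↥(Set.Iio To)) ≤ #(↥(Set.Iio To)) := by
      rw [Cardinal.mk_prod]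
      simp only [Cardinal.lift_id]
      rw [mkT]
      calc #(↥𝓑) * Cardinal.lift.{1} θ
          ≤ Cardinal.lift.{1} θ * Cardinal.lift.{1} θ := mul_le_mul' hc𝓑 le_rfl
        _ = Cardinal.lift.{1} θ := Cardinal.mul_eq_self haleT
    obtain ⟨q, hq⟩ := exists_surjish hpq
    set F : Ordinal.{0} → Set Ordinal.{0} := fun ξ =>
      if h : ξ < To then ((q ⟨ξ, h⟩).1 : ↥𝓑).1 else Set.univ with hFdef
    have hFval : ∀ ξ, (h : ξ < To) → F ξ = ((q ⟨ξ, h⟩).1 : ↥𝓑).1 := by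
      intro ξ h
      simp only [hFdef]
      rw [dif_pos h]
    have hFcard : ∀ ξ < θ.ord, Cardinal.lift.{1} θ ≤ #(F ξ) := by
      intro ξ hξ
      have h' : ξ < To := by rw [hTo]; exact hξ
      rw [hFval ξ h']
      exact ((hB𝓑 _ (q ⟨ξ, h'⟩).1.2).2).ge
    obtain ⟨pick, hpickmem, hpickinj⟩ := greedy_pick θ F hFcard
    have hxmem : ∀ i : ↥(Set.Iio To), pick i.1 ∈ ((q i).1 : ↥𝓑).1 := by
      intro i
      have h2 := hpickmem i.1 i.2
      rw [hFval i.1 i.2] at h2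
      exact h2
    set x : ↥(Set.Iio To) → ↥(Set.Iio Xo) :=
      fun i => ⟨pick i.1, (hB𝓑 _ (q i).1.2).1 (hxmem i)⟩ with hxdef
    have hxinj : Function.Injective x := by
      intro i j hij
      exact Subtype.ext (hpickinj i.2 j.2 (congrArg Subtype.val hij))
    obtain ⟨α, hα⟩ := hf x hxinj (fun i => (q i).2)
    obtain ⟨B, hB, hnot⟩ := hfail α.1 α.2
    apply hnot
    intro τ hτ
    obtain ⟨k, hk⟩ := hq (⟨B, hB⟩, ⟨τ, hτ⟩)
    have hmemB : pick k.1 ∈ B := by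
      have h3 := hxmem k
      rw [hk] at h3
      exact h3
    have hbXo : pick k.1 < Xo := (hB𝓑 B hB).1 hmemB
    refine ⟨pick k.1, hmemB, ?_⟩
    rw [hcval α.1 α.2 _ hbXo]
    have h4 := congrArg Subtype.val (hα k)
    rw [hk] at h4
    exact h4
  · -- range of colouring
    intro a ha b hb
    rw [hcval a ha b hb]
    exact (f ⟨a, ha⟩ ⟨b, hb⟩).2
  · -- the onto property
    intro A hA hAI B hB hBcard
    have h3 : ¬ (∀ a ∈ A, ∃ B' ∈ ({B} : Set (Set Ordinal.{0})),
        ¬ ∀ τ < To, ∃ b ∈ B', c a b = τ) := by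
      intro h
      exact hAI ⟨hA, {B}, by
          rw [Cardinal.mk_singleton]
          exact (Cardinal.one_lt_aleph0.trans_le haleT).le,
        fun B' hB' => by
          rw [Set.mem_singleton_iff] at hB'
          subst hB'
          exact ⟨hB, hBcard⟩, h⟩
    push_neg at h3
    obtain ⟨a, haA, h4⟩ := h3
    exact ⟨a, haA, h4 B rfl⟩

end LadderPaper
end

section
/- Suppose there is a ladder system L = ⟨A_δ : δ ∈ S⟩ over a stationary S ⊆ κ (κ regular uncountable), together with a partition ⟨S_n : n < ω⟩ of S, such that: (i) for every cofinal A ⊆ κ and every n < ω there is δ ∈ S_n with sup(A_δ ∩ A) = δ; and (ii) for every pair γ < δ from S, sup(A_γ ∩ A_δ) < γ. Then, letting g : S → ω be the function with g(δ) = n iff δ ∈ S_n, for every f : κ → ω there exists δ ∈ S with sup{α ∈ A_δ : f(α) = g(δ)} = δ. In particular there is no f : κ → ω with sup{α ∈ A_δ : f(α) ≤ g(δ)} < δ for all δ ∈ S. -/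
open Cardinal Set

namespace LadderPaper

/-- A ladder system with the adjacency-club guessing property over a
partition `⟨S_n : n < ω⟩` of `S` yields, via the colour function `g`, a failure of the
countable metacompactness characterisation. -/
theorem stmt14 (κ : Cardinal) (hκreg : κ.IsRegular) (hκunc : ℵ₀ < κ)
    (S : Set Ordinal) (A : Ordinal → Set Ordinal) (hL : IsLadderOn κ.ord S A)
    (Sn : ℕ → Set Ordinal)
    (hpart : ∀ δ : Ordinal, δ ∈ S ↔ ∃ n, δ ∈ Sn n)
    (hdisj : ∀ m n : ℕ, m ≠ n → Disjoint (Sn m) (Sn n))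
    (hguess : ∀ A' ⊆ Set.Iio κ.ord, (∀ β < κ.ord, ∃ α ∈ A', β ≤ α) →
      ∀ n : ℕ, ∃ δ ∈ Sn n, sSup (A δ ∩ A') = δ)
    (hsep : ∀ γ ∈ S, ∀ δ ∈ S, γ < δ → sSup (A γ ∩ A δ) < γ)
    (g : Ordinal → ℕ)
    (hg : ∀ δ ∈ S, ∀ n : ℕ, (g δ = n ↔ δ ∈ Sn n)) :
    (∀ f : Ordinal → ℕ, ∃ δ ∈ S, sSup {α ∈ A δ | f α = g δ} = δ) ∧
      ¬ ∃ f : Ordinal → ℕ, ∀ δ ∈ S, sSup {α ∈ A δ | f α ≤ g δ} < δ := by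
  have main : ∀ f : Ordinal → ℕ, ∃ δ ∈ S, sSup {α ∈ A δ | f α = g δ} = δ := by
    intro f
    -- find n with cofinal fibre
    have hcof : ∃ n : ℕ, ∀ β < κ.ord, ∃ α, (α < κ.ord ∧ f α = n) ∧ β ≤ α := by
      by_contra h
      push_neg at h
      choose β hβ hb using h
      have hsup : (⨆ n, β n) < κ.ord := by
        apply Cardinal.iSup_lt_ord_lift_of_isRegular hκreg
        · rwa [Cardinal.mk_eq_aleph0, Cardinal.lift_aleph0]
        · exact hβ
      have hmem := hb (f (⨆ n, β n)) (⨆ n, β n) ⟨hsup, rfl⟩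
      exact absurd (le_ciSup (Ordinal.bddAbove_range β) (f (⨆ n, β n)))
        (not_le.mpr hmem)
    obtain ⟨n, hn⟩ := hcof
    obtain ⟨δ, hδn, hδs⟩ := hguess {α | α < κ.ord ∧ f α = n}
      (fun α hα => hα.1) (fun β hβ => hn β hβ) n
    have hδS : δ ∈ S := (hpart δ).2 ⟨n, hδn⟩
    have hgδ : g δ = n := (hg δ hδS n).2 hδn
    refine ⟨δ, hδS, ?_⟩
    have hset : {α ∈ A δ | f α = g δ} = A δ ∩ {α | α < κ.ord ∧ f α = n} := by
      ext α
      constructor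
      · rintro ⟨h1, h2⟩
        exact ⟨h1, lt_trans ((hL.2 δ hδS).1 h1) (hL.1.1 hδS), hgδ ▸ h2⟩
      · rintro ⟨h1, _, h3⟩
        exact ⟨h1, hgδ ▸ h3⟩
    rw [hset, hδs]
  refine ⟨main, ?_⟩
  rintro ⟨f, hf⟩
  obtain ⟨δ, hδS, hδs⟩ := main f
  have hsub : {α ∈ A δ | f α = g δ} ⊆ {α ∈ A δ | f α ≤ g δ} :=
    fun α ⟨h1, h2⟩ => ⟨h1, le_of_eq h2⟩
  have hbdd : BddAbove {α ∈ A δ | f α ≤ g δ} :=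
    ⟨δ, fun α hα => le_of_lt ((hL.2 δ hδS).1 hα.1)⟩
  have := csSup_le_csSup' hbdd hsub
  rw [hδs] at this
  exact absurd (hf δ hδS) (not_lt.mpr this)

end LadderPaper
end

section
/- Let κ be regular uncountable, μ < κ regular, S ⊆ E^κ_μ stationary, and C = ⟨C_δ : δ ∈ S⟩ a C-sequence (each C_δ a club in δ of order type μ) with the weak coherence property: for all γ < δ from S and all β ∈ nacc(C_γ) ∩ nacc(C_δ), C_γ ∩ β = C_δ ∩ β. Let h : κ → 2^λ be increasing and cofinal where κ = cf(2^λ), and let T_{<δ} be an increasing filtration of the set T of all functions from sets of the form C_δ ∩ β (β ∈ nacc(C_δ), δ ∈ S) into 2^λ, with |T_{<δ}| < 2^λ. Define P_δ := {f : C_δ → h(δ) : for all β ∈ nacc(C_δ), f↾(C_δ ∩ β) ∈ T_{<δ}}. Then for every f : κ → 2^λ, for club-many δ ∈ S, f↾C_δ ∈ P_δ. -/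
open Cardinal Set

namespace LadderPaper

/-- `p` is (the zero-extension of) a function with domain `D`. -/
def SupportedOn (D : Set Ordinal.{0}) (p : Ordinal.{0} → Ordinal.{0}) : Prop :=
  ∀ α, α ∉ D → p α = 0

/-! For each `β < κ`, both requirements on `δ` hold from some stage on: `f β < h δ` because
`h` is increasing and cofinal in `2 ^ lam`, and `f↾(C δ ∩ β) ∈ T_{<δ}` because weak coherence
makes this restriction the same function for all `δ ∈ S` with `β ∈ nacc (C δ)`, so it enters the
filtration at one fixed stage. The closure points of `β ↦ (that stage)` form a club, since
`κ = cf (2 ^ lam)` is regular and, by König's theorem, uncountable. -/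

theorem isClubIn_closurePoints {κ : Cardinal.{u}} (hκ : κ.IsRegular) (hκω : ℵ₀ < κ)
    {g : Ordinal.{u} → Ordinal.{u}} (hg : ∀ β < κ.ord, g β < κ.ord) :
    IsClubIn {δ | δ < κ.ord ∧ ∀ β < δ, g β < δ} κ.ord := by
  let G : Ordinal.{u} → Ordinal.{u} := fun a => ⨆ β : Iio a, g β + 1
  have lt_G : ∀ {a β}, β < a → g β < G a := fun {a β} h =>
    (Order.lt_add_one_iff.2 le_rfl).trans_le
      (Ordinal.le_iSup (fun β : Iio a => g β + 1) ⟨β, h⟩)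
  have G_lt : ∀ a < κ.ord, G a < κ.ord := fun a ha => by
    refine Ordinal.lift_iSup_add_one_lt_of_lt_cof (f := fun β : Iio a => g β) ?_
      fun β => hg β (β.2.trans ha)
    rwa [mk_Iio_ordinal, ← Ordinal.lift_cof, hκ.cof_ord, lift_lift, lift_lt, ← lt_ord]
  refine ⟨fun δ hδ => hδ.1, fun α hα => ?_, fun α hα _ hcl => ⟨hα, fun β hβ => ?_⟩⟩
  · refine ⟨Ordinal.nfp G α, ⟨nfp_lt_ord_of_isRegular hκ hκω.ne' G_lt hα, fun β hβ => ?_⟩,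
      Ordinal.le_nfp G α⟩
    obtain ⟨n, hn⟩ := Ordinal.lt_nfp_iff.1 hβ
    calc g β < G (G^[n] α) := lt_G hn
      _ = G^[n + 1] α := (Function.iterate_succ_apply' G n α).symm
      _ ≤ Ordinal.nfp G α := Ordinal.iterate_le_nfp G α (n + 1)
  · obtain ⟨γ, hγ, hβγ, hγα⟩ := hcl β hβ
    exact (hγ.2 β hβγ).trans hγα

theorem exists_isClubIn_forall_lt {κ : Cardinal.{u}} (hκ : κ.IsRegular) (hκω : ℵ₀ < κ)
    (P : Ordinal.{u} → Ordinal.{u} → Prop)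
    (hP : ∀ β < κ.ord, ∃ γ < κ.ord, ∀ δ < κ.ord, γ < δ → P β δ) :
    ∃ D, IsClubIn D κ.ord ∧ ∀ δ ∈ D, ∀ β < δ, P β δ := by
  choose! g hgκ hgP using hP
  exact ⟨_, isClubIn_closurePoints hκ hκω hgκ, fun δ ⟨hδ, hδg⟩ β hβ =>
    hgP β (hβ.trans hδ) δ hδ (hδg β hβ)⟩

theorem exists_forall_lt_apply_of_strictMono {κ θ ξ : Ordinal} {h : Ordinal → Ordinal}
    (hmono : ∀ γ δ, γ < δ → δ < κ → h γ < h δ) (hcofinal : ∀ ξ < θ, ∃ γ < κ, ξ ≤ h γ)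
    (hξ : ξ < θ) : ∃ γ < κ, ∀ δ < κ, γ < δ → ξ < h δ := by
  obtain ⟨γ, hγ, hξγ⟩ := hcofinal ξ hξ
  exact ⟨γ, hγ, fun δ hδ hγδ => hξγ.trans_lt (hmono γ δ hγδ hδ)⟩

section WeaklyCoherent

variable {S : Set Ordinal.{0}} {C : Ordinal.{0} → Set Ordinal.{0}}

theorem inter_Iio_eq_of_mem_nacc
    (hcoh : ∀ γ ∈ S, ∀ δ ∈ S, γ < δ → ∀ β, β ∈ nacc (C γ) → β ∈ nacc (C δ) →
      C γ ∩ Iio β = C δ ∩ Iio β)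
    {γ δ β : Ordinal} (hγ : γ ∈ S) (hδ : δ ∈ S) (hβγ : β ∈ nacc (C γ))
    (hβδ : β ∈ nacc (C δ)) : C γ ∩ Iio β = C δ ∩ Iio β := by
  rcases lt_trichotomy γ δ with hlt | rfl | hgt
  · exact hcoh γ hγ δ hδ hlt β hβγ hβδ
  · rfl
  · exact (hcoh δ hδ γ hγ hgt β hβδ hβγ).symm

theorem exists_forall_indicator_mem
    (hcoh : ∀ γ ∈ S, ∀ δ ∈ S, γ < δ → ∀ β, β ∈ nacc (C γ) → β ∈ nacc (C δ) →
      C γ ∩ Iio β = C δ ∩ Iio β)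
    {κ θ : Ordinal.{0}} {Tlt : Ordinal.{0} → Set (Ordinal.{0} → Ordinal.{0})}
    (hTcover : ∀ p : Ordinal.{0} → Ordinal.{0},
      (∃ δ' ∈ S, ∃ β ∈ nacc (C δ'), SupportedOn (C δ' ∩ Iio β) p ∧
        ∀ α ∈ C δ' ∩ Iio β, p α < θ) →
      ∃ γ < κ, p ∈ Tlt γ)
    {f : Ordinal.{0} → Ordinal.{0}} (hf : ∀ α < κ, f α < θ) {β : Ordinal} (hβ : β < κ) :
    ∃ γ < κ, ∀ δ ∈ S, β ∈ nacc (C δ) → (C δ ∩ Iio β).indicator f ∈ Tlt γ := by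
  by_cases hβS : ∃ δ' ∈ S, β ∈ nacc (C δ')
  · obtain ⟨δ', hδ', hβδ'⟩ := hβS
    have hp_lt : ∀ α ∈ C δ' ∩ Iio β, (C δ' ∩ Iio β).indicator f α < θ := fun α hα => by
      rw [indicator_of_mem hα]
      exact hf α (hα.2.trans hβ)
    obtain ⟨γ, hγ, hpγ⟩ := hTcover _
      ⟨δ', hδ', β, hβδ', fun α hα => indicator_of_notMem hα f, hp_lt⟩
    refine ⟨γ, hγ, fun δ hδ hβδ => ?_⟩
    rwa [inter_Iio_eq_of_mem_nacc hcoh hδ hδ' hβδ hβδ']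
  · exact ⟨β, hβ, fun δ hδ hβδ => absurd ⟨δ, hδ, hβδ⟩ hβS⟩

end WeaklyCoherent

theorem stmt16_general (lam κ μ : Cardinal.{0}) (hlam : ℵ₀ ≤ lam)
    (hκ : κ = ((2 : Cardinal) ^ lam).ord.cof)
    (S : Set Ordinal.{0})
    (C : Ordinal.{0} → Set Ordinal.{0})
    (hC : ∀ δ ∈ S, C δ ⊆ Set.Iio δ ∧ (∀ β < δ, ∃ α ∈ C δ, β ≤ α) ∧
      (∀ α < δ, 0 < α → (∀ β < α, ∃ γ ∈ C δ, β < γ ∧ γ < α) → α ∈ C δ) ∧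
      otp (C δ) = ol μ.ord)
    (hcoh : ∀ γ ∈ S, ∀ δ ∈ S, γ < δ → ∀ β, β ∈ nacc (C γ) → β ∈ nacc (C δ) →
      C γ ∩ Set.Iio β = C δ ∩ Set.Iio β)
    (h : Ordinal.{0} → Ordinal.{0})
    (hmono : ∀ γ δ : Ordinal.{0}, γ < δ → δ < κ.ord → h γ < h δ)
    (hcofinal : ∀ ξ < ((2 : Cardinal) ^ lam).ord, ∃ γ < κ.ord, ξ ≤ h γ)
    (Tlt : Ordinal.{0} → Set (Ordinal.{0} → Ordinal.{0}))
    (hTmono : ∀ γ δ : Ordinal.{0}, γ ≤ δ → δ < κ.ord → Tlt γ ⊆ Tlt δ)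
    (hTcover : ∀ p : Ordinal.{0} → Ordinal.{0},
      (∃ δ' ∈ S, ∃ β ∈ nacc (C δ'), SupportedOn (C δ' ∩ Set.Iio β) p ∧
        ∀ α ∈ C δ' ∩ Set.Iio β, p α < ((2 : Cardinal) ^ lam).ord) →
      ∃ γ < κ.ord, p ∈ Tlt γ)
    (f : Ordinal.{0} → Ordinal.{0})
    (hf : ∀ α < κ.ord, f α < ((2 : Cardinal) ^ lam).ord) :
    ∃ D, IsClubIn D κ.ord ∧ ∀ δ ∈ S ∩ D,
      (∀ α ∈ C δ, f α < h δ) ∧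
      ∀ β ∈ nacc (C δ), (C δ ∩ Set.Iio β).indicator f ∈ Tlt δ := by
  have hκω : ℵ₀ < κ := hκ ▸ hlam.trans_lt (lt_cof_ord_power hlam one_lt_two)
  have hκreg : κ.IsRegular := hκ ▸ isRegular_cof
    (isSuccLimit_ord (hlam.trans (cantor lam).le))
  obtain ⟨D, hD, hDP⟩ := exists_isClubIn_forall_lt hκreg hκω
    (fun β δ => f β < h δ ∧ ∀ δ' ∈ S, β ∈ nacc (C δ') → (C δ' ∩ Iio β).indicator f ∈ Tlt δ)
    fun β hβ => by
      obtain ⟨γ₁, hγ₁, h₁⟩ := exists_forall_lt_apply_of_strictMono hmono hcofinal (hf β hβ)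
      obtain ⟨γ₂, hγ₂, h₂⟩ := exists_forall_indicator_mem hcoh hTcover hf hβ
      refine ⟨max γ₁ γ₂, max_lt hγ₁ hγ₂, fun δ hδ hγδ => ⟨h₁ δ hδ ?_, fun δ' hδ' hβδ' => ?_⟩⟩
      · exact (le_max_left _ _).trans_lt hγδ
      · exact hTmono γ₂ δ ((le_max_right _ _).trans hγδ.le) hδ (h₂ δ' hδ' hβδ')
  refine ⟨D, hD, fun δ ⟨hδS, hδD⟩ => ⟨fun α hα => ?_, fun β hβ => ?_⟩⟩
  · exact (hDP δ hδD α ((hC δ hδS).1 hα)).1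
  · exact (hDP δ hδD β ((hC δ hδS).1 hβ.1)).2 δ hδS hβ

/-- Given a weakly coherent `C`-sequence on `S ⊆ E^κ_μ` (where
`κ = cf(2^lam)`), an increasing cofinal `h : κ → 2^lam` and an increasing filtration
`⟨T_{<δ} : δ < κ⟩` (of size `< 2^lam` each) of the set `T` of all functions
`C_δ ∩ β → 2^lam` (`β ∈ nacc (C δ)`, `δ ∈ S`), every `f : κ → 2^lam` satisfies
`f↾C_δ ∈ P_δ` for club-many `δ ∈ S`, where
`P_δ = {p : C_δ → h δ | ∀ β ∈ nacc (C δ), p↾(C δ ∩ β) ∈ T_{<δ}}`. -/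
theorem stmt16 (lam κ μ : Cardinal.{0}) (hlam : ℵ₀ ≤ lam)
    (hκ : κ = ((2 : Cardinal) ^ lam).ord.cof)
    (hμreg : μ.IsRegular) (hμκ : μ < κ)
    (S : Set Ordinal.{0}) (hS : IsStationaryIn S κ.ord)
    (hSE : S ⊆ {δ : Ordinal.{0} | δ.cof = μ})
    (C : Ordinal.{0} → Set Ordinal.{0})
    (hC : ∀ δ ∈ S, C δ ⊆ Set.Iio δ ∧ (∀ β < δ, ∃ α ∈ C δ, β ≤ α) ∧
      (∀ α < δ, 0 < α → (∀ β < α, ∃ γ ∈ C δ, β < γ ∧ γ < α) → α ∈ C δ) ∧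
      otp (C δ) = ol μ.ord)
    (hcoh : ∀ γ ∈ S, ∀ δ ∈ S, γ < δ → ∀ β, β ∈ nacc (C γ) → β ∈ nacc (C δ) →
      C γ ∩ Set.Iio β = C δ ∩ Set.Iio β)
    (h : Ordinal.{0} → Ordinal.{0})
    (hmono : ∀ γ δ : Ordinal.{0}, γ < δ → δ < κ.ord → h γ < h δ)
    (hval : ∀ γ < κ.ord, h γ < ((2 : Cardinal) ^ lam).ord)
    (hcofinal : ∀ ξ < ((2 : Cardinal) ^ lam).ord, ∃ γ < κ.ord, ξ ≤ h γ)
    (Tlt : Ordinal.{0} → Set (Ordinal.{0} → Ordinal.{0}))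
    (hTsub : ∀ δ < κ.ord, ∀ p ∈ Tlt δ, ∃ δ' ∈ S, ∃ β ∈ nacc (C δ'),
      SupportedOn (C δ' ∩ Set.Iio β) p ∧
      ∀ α ∈ C δ' ∩ Set.Iio β, p α < ((2 : Cardinal) ^ lam).ord)
    (hTmono : ∀ γ δ : Ordinal.{0}, γ ≤ δ → δ < κ.ord → Tlt γ ⊆ Tlt δ)
    (hTcover : ∀ p : Ordinal.{0} → Ordinal.{0},
      (∃ δ' ∈ S, ∃ β ∈ nacc (C δ'), SupportedOn (C δ' ∩ Set.Iio β) p ∧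
        ∀ α ∈ C δ' ∩ Set.Iio β, p α < ((2 : Cardinal) ^ lam).ord) →
      ∃ γ < κ.ord, p ∈ Tlt γ)
    (hTsize : ∀ δ < κ.ord, #(Tlt δ) < cl ((2 : Cardinal) ^ lam))
    (f : Ordinal.{0} → Ordinal.{0})
    (hf : ∀ α < κ.ord, f α < ((2 : Cardinal) ^ lam).ord) :
    ∃ D, IsClubIn D κ.ord ∧ ∀ δ ∈ S ∩ D,
      (∀ α ∈ C δ, f α < h δ) ∧
      ∀ β ∈ nacc (C δ), (C δ ∩ Set.Iio β).indicator f ∈ Tlt δ :=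
  stmt16_general lam κ μ hlam hκ S C hC hcoh h hmono hcofinal Tlt hTmono hTcover f hf

end LadderPaper
end

section
/- Let χ be an infinite cardinal and suppose ⟨C_ρ : ρ ∈ R⟩ is a χ-bounded C-sequence on a stationary set R ⊆ acc(κ) ∩ E^κ_{≤χ} (κ regular, κ > χ⁺) such that for every ρ ∈ R and δ ∈ acc(C_ρ), δ ∈ R and C_δ = C_ρ ∩ δ, and such that for every club D ⊆ κ and every ε < κ there exists ρ ∈ R ∩ E^κ_χ with nacc(C_ρ) ⊆ D and min(C_ρ) ≥ ε. Then the set E := {ε < κ : for every club D ⊆ κ there is ρ ∈ R ∩ E^κ_χ with nacc(C_ρ) ⊆* D and min(C_ρ) = ε} is cofinal in κ. -/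
/-!
If no `ε ≥ ε₀` lay in `E`, each such `ε` would have a club `D ε` that no ladder with minimum `ε`
guesses modulo a bounded set. Guessing the diagonal intersection of the `D ε` (a club, as `κ` is
regular) by a ladder `C ρ` with `min (C ρ) = ε ≥ ε₀` then puts every point of `nacc (C ρ)` above
`ε` into `D ε`, so `D ε` is guessed after all.
-/

open Cardinal Set

namespace LadderPaper

theorem isClubIn_Iio (ν : Ordinal) : IsClubIn (Iio ν) ν :=
  ⟨subset_rfl, fun α hα => ⟨α, hα, le_rfl⟩, fun _ hα _ _ => hα⟩

theorem csInf_mem_nacc {A : Set Ordinal} (hA : A.Nonempty) : sInf A ∈ nacc A := by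
  refine ⟨csInf_mem hA, fun ⟨_, hsup, hpos⟩ => hpos.ne' ?_⟩
  have hbelow : A ∩ Iio (sInf A) = ∅ :=
    eq_empty_of_forall_notMem fun _ ⟨ha, hlt⟩ => notMem_of_lt_csInf' hlt ha
  rw [← hsup, hbelow, csSup_empty, Ordinal.bot_eq_zero]

theorem iSup_Iio_lt_ord {κ : Cardinal} (hκ : κ.IsRegular) {y : Ordinal} (hy : y < κ.ord)
    {f : Ordinal → Ordinal} (hf : ∀ ε < y, f ε < κ.ord) : ⨆ ε : Iio y, f ε < κ.ord := by
  refine Ordinal.lift_iSup_lt_of_lt_cof (f := fun ε : Iio y => f ε) ?_ fun ε => hf ε.1 ε.2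
  rw [mk_Iio_ordinal, ← Ordinal.lift_cof, hκ.cof_ord, lift_lift, lift_lt]
  exact lt_ord.1 hy

noncomputable def nextIn (D : Set Ordinal) (y : Ordinal) : Ordinal := sInf (D ∩ Ici y)

theorem IsClubIn.nextIn_mem {D : Set Ordinal} {ν y : Ordinal} (hD : IsClubIn D ν) (hy : y < ν) :
    nextIn D y ∈ D ∩ Ici y :=
  let ⟨β, hβD, hyβ⟩ := hD.2.1 y hy
  csInf_mem ⟨β, hβD, hyβ⟩

theorem IsClubIn.nextIn_lt {D : Set Ordinal} {ν y : Ordinal} (hD : IsClubIn D ν) (hy : y < ν) :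
    nextIn D y < ν :=
  hD.1 (hD.nextIn_mem hy).1

def diagInter (ν : Ordinal) (D : Ordinal → Set Ordinal) : Set Ordinal :=
  {β | β < ν ∧ ∀ ε < β, β ∈ D ε}

section DiagInter

variable {κ : Cardinal} {D : Ordinal → Set Ordinal}

theorem exists_mem_diagInter_ge (hκ : κ.IsRegular) (hκω : ℵ₀ < κ)
    (hD : ∀ ε < κ.ord, IsClubIn (D ε) κ.ord) {α : Ordinal} (hα : α < κ.ord) :
    ∃ β ∈ diagInter κ.ord D, α ≤ β := by
  -- `β` will be the closure of `α` under `g`, which jumps past the next point of every `D ε`, `ε < y`.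
  set g : Ordinal → Ordinal := fun y => max (y + 1) (⨆ ε : Iio y, nextIn (D ε) y)
  have hg_lt : ∀ y < κ.ord, g y < κ.ord := fun y hy =>
    max_lt ((Cardinal.isSuccLimit_ord hκ.aleph0_le).add_one_lt hy)
      (iSup_Iio_lt_ord hκ hy fun ε hε => (hD ε (hε.trans hy)).nextIn_lt hy)
  have hlt_g : ∀ y, y < g y := fun y => (Order.lt_add_one_iff.2 le_rfl).trans_le (le_max_left _ _)
  have hnext_le_g : ∀ y, ∀ ε < y, nextIn (D ε) y ≤ g y := fun y ε hε =>
    (Ordinal.le_iSup (fun ε : Iio y => nextIn (D ε) y) ⟨ε, hε⟩).trans (le_max_right _ _)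
  set β := Ordinal.nfp g α
  have hβ : β < κ.ord := nfp_lt_ord_of_isRegular hκ hκω.ne' hg_lt hα
  refine ⟨β, ⟨hβ, fun ε hε => ?_⟩, Ordinal.le_nfp g α⟩
  refine (hD ε (hε.trans hβ)).2.2 β hβ (pos_of_gt hε) fun γ hγ => ?_
  obtain ⟨n, hn⟩ := Ordinal.lt_nfp_iff.1 (max_lt hγ hε)
  have hx : g^[n] α < κ.ord := (Ordinal.iterate_le_nfp g α n).trans_lt hβ
  obtain ⟨hmem, hge⟩ := (hD ε (hε.trans hβ)).nextIn_mem hx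
  refine ⟨nextIn (D ε) (g^[n] α), hmem, (le_max_left γ ε).trans_lt (hn.trans_le hge), ?_⟩
  calc nextIn (D ε) (g^[n] α) ≤ g^[n + 1] α := by
        rw [Function.iterate_succ_apply']; exact hnext_le_g _ ε ((le_max_right γ ε).trans_lt hn)
    _ < g^[n + 2] α := by rw [Function.iterate_succ_apply' g (n + 1)]; exact hlt_g _
    _ ≤ β := Ordinal.iterate_le_nfp g α _

theorem isClubIn_diagInter (hκ : κ.IsRegular) (hκω : ℵ₀ < κ)
    (hD : ∀ ε < κ.ord, IsClubIn (D ε) κ.ord) : IsClubIn (diagInter κ.ord D) κ.ord := by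
  refine ⟨fun β hβ => hβ.1, fun α hα => exists_mem_diagInter_ge hκ hκω hD hα,
    fun α hα hα0 hcof => ⟨hα, fun ε hε => (hD ε (hε.trans hα)).2.2 α hα hα0 fun γ hγ => ?_⟩⟩
  obtain ⟨δ, hδ, hlt, hδα⟩ := hcof (max γ ε) (max_lt hγ hε)
  exact ⟨δ, hδ.2 ε ((le_max_right γ ε).trans_lt hlt), (le_max_left γ ε).trans_lt hlt, hδα⟩

end DiagInter

/-- Some `ρ ∈ R ∩ E^κ_χ` has `nacc (C ρ) ⊆* D` and `min (C ρ) = ε`. -/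
def GuessesWithMin (R : Set Ordinal) (C : Ordinal → Set Ordinal) (χ : Cardinal) (ε : Ordinal)
    (D : Set Ordinal) : Prop :=
  ∃ ρ ∈ R, ρ.cof = χ ∧ (∃ β < ρ, ∀ α ∈ nacc (C ρ), β < α → α ∈ D) ∧ sInf (C ρ) = ε

theorem guessesWithMin_of_nacc_subset_diagInter {R : Set Ordinal} {C : Ordinal → Set Ordinal}
    {χ : Cardinal} {ν ρ : Ordinal} {D : Ordinal → Set Ordinal} (hρ : ρ ∈ R) (hcof : ρ.cof = χ)
    (hCρ : C ρ ⊆ Iio ρ) (hne : (C ρ).Nonempty) (hsub : nacc (C ρ) ⊆ diagInter ν D) :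
    GuessesWithMin R C χ (sInf (C ρ)) (D (sInf (C ρ))) :=
  ⟨ρ, hρ, hcof, ⟨_, hCρ (csInf_mem hne), fun _ hα hlt => (hsub hα).2 _ hlt⟩, rfl⟩

theorem stmt18_general (κ χ : Cardinal.{0}) (hχ : ℵ₀ ≤ χ) (hκreg : κ.IsRegular)
    (hχκ : Order.succ χ < κ)
    (R : Set Ordinal.{0})
    (C : Ordinal.{0} → Set Ordinal.{0})
    (hC : ∀ ρ ∈ R, C ρ ⊆ Set.Iio ρ ∧ (∀ β < ρ, ∃ α ∈ C ρ, β ≤ α) ∧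
      (∀ α < ρ, 0 < α → (∀ β < α, ∃ γ ∈ C ρ, β < γ ∧ γ < α) → α ∈ C ρ) ∧
      otp (C ρ) ≤ ol χ.ord)
    (hguess : ∀ D, IsClubIn D κ.ord → ∀ ε < κ.ord,
      ∃ ρ ∈ R, ρ.cof = χ ∧ nacc (C ρ) ⊆ D ∧ ε ≤ sInf (C ρ)) :
    ∀ ε₀ < κ.ord, ∃ ε, ε₀ ≤ ε ∧ ε < κ.ord ∧
      ∀ D, IsClubIn D κ.ord → ∃ ρ ∈ R, ρ.cof = χ ∧
        (∃ β < ρ, ∀ α ∈ nacc (C ρ), β < α → α ∈ D) ∧ sInf (C ρ) = ε := by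
  intro ε₀ hε₀
  by_contra hcon
  have hbad : ∀ ε < κ.ord, ∃ D, IsClubIn D κ.ord ∧ (ε₀ ≤ ε → ¬ GuessesWithMin R C χ ε D) := by
    intro ε hε
    by_cases hε₀ε : ε₀ ≤ ε
    · by_contra! h
      exact hcon ⟨ε, hε₀ε, hε, fun D hD => (h D hD).2⟩
    · exact ⟨Iio κ.ord, isClubIn_Iio _, (absurd · hε₀ε)⟩
  choose! D hDclub hDbad using hbad
  have hκω : ℵ₀ < κ := hχ.trans_lt ((Order.lt_succ χ).trans hχκ)
  obtain ⟨ρ, hρR, hρcof, hnacc, hε₀ρ⟩ := hguess _ (isClubIn_diagInter hκreg hκω hDclub) ε₀ hε₀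
  obtain ⟨hCρ, hCρ_cofinal, -⟩ := hC ρ hρR
  have hρ : 0 < ρ := by
    refine pos_iff_ne_zero.2 fun hρ0 => ?_
    rw [hρ0, Ordinal.cof_zero] at hρcof
    exact aleph0_ne_zero (le_zero_iff.1 (hρcof ▸ hχ))
  have hne : (C ρ).Nonempty := let ⟨a, ha, _⟩ := hCρ_cofinal 0 hρ; ⟨a, ha⟩
  have hmin_lt := (hnacc (csInf_mem_nacc hne)).1
  exact hDbad _ hmin_lt hε₀ρ (guessesWithMin_of_nacc_subset_diagInter hρR hρcof hCρ hne hnacc)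

/-- For a coherent `χ`-bounded `C`-sequence on a stationary
`R ⊆ acc(κ) ∩ E^κ_{≤χ}` guessing clubs relative to every `ε`, the set
`E = {ε < κ | ∀ club D ∃ ρ ∈ R ∩ E^κ_χ, nacc (C ρ) ⊆* D ∧ min (C ρ) = ε}` is cofinal
in `κ`. -/
theorem stmt18 (κ χ : Cardinal.{0}) (hχ : ℵ₀ ≤ χ) (hκreg : κ.IsRegular)
    (hχκ : Order.succ χ < κ)
    (R : Set Ordinal.{0}) (hRstat : IsStationaryIn R κ.ord)
    (hRsub : R ⊆ {δ : Ordinal.{0} | Order.IsSuccLimit δ ∧ δ.cof ≤ χ})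
    (C : Ordinal.{0} → Set Ordinal.{0})
    (hC : ∀ ρ ∈ R, C ρ ⊆ Set.Iio ρ ∧ (∀ β < ρ, ∃ α ∈ C ρ, β ≤ α) ∧
      (∀ α < ρ, 0 < α → (∀ β < α, ∃ γ ∈ C ρ, β < γ ∧ γ < α) → α ∈ C ρ) ∧
      otp (C ρ) ≤ ol χ.ord)
    (hcoh : ∀ ρ ∈ R, ∀ δ ∈ acc (C ρ), δ ∈ R ∧ C δ = C ρ ∩ Set.Iio δ)
    (hguess : ∀ D, IsClubIn D κ.ord → ∀ ε < κ.ord,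
      ∃ ρ ∈ R, ρ.cof = χ ∧ nacc (C ρ) ⊆ D ∧ ε ≤ sInf (C ρ)) :
    ∀ ε₀ < κ.ord, ∃ ε, ε₀ ≤ ε ∧ ε < κ.ord ∧
      ∀ D, IsClubIn D κ.ord → ∃ ρ ∈ R, ρ.cof = χ ∧
        (∃ β < ρ, ∀ α ∈ nacc (C ρ), β < α → α ∈ D) ∧ sInf (C ρ) = ε :=
  stmt18_general κ χ hχ hκreg hχκ R C hC hguess

end LadderPaper
end
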